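/- arXiv:math/0506425 — 7 statements merged into one kernel-verified Lean document; each statement's English description precedes it below -/
import Mathlib

section
/- Let n₁, n₂ ≥ 2 be integers and α₁, α₂ > 0 real numbers with α₁^{n₁} · α₂^{n₂} = 1. Then √((n₁-1)²/α₁² + (n₂-1)²/α₂²) ≥ √(n₁+n₂) · (((n₁-1)/√n₁)^{n₁} · ((n₂-1)/√n₂)^{n₂})^{1/(n₁+n₂)}, with equality if and only if α₁ = [((n₁-1)√n₂/(√n₁(n₂-1)))^{n₂}]^{1/(n₁+n₂)} and α₂ = [((n₂-1)√n₁/(√n₂(n₁-1)))^{n₁}]^{1/(n₁+n₂)}. -/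
/-!
With `u = (n₁ - 1) / (√n₁ α₁)` and `v = (n₂ - 1) / (√n₂ α₂)` the squared entropy is
`n₁ u² + n₂ v²`, while the volume normalization makes `u ^ n₁ * v ^ n₂` the constant
`((n₁ - 1) / √n₁) ^ n₁ * ((n₂ - 1) / √n₂) ^ n₂`. Weighted AM-GM for `u²` and `v²` with weights
`nᵢ / (n₁ + n₂)` (strict concavity of `log`) gives the bound, with equality iff `u = v`; under the
normalization, `u = v` determines `α₁` and `α₂`.
-/

open Real

section QuadraticGeometricMean

variable {m n u v : ℝ}

lemma rpow_one_div_add_sq (hu : 0 ≤ u) (hv : 0 ≤ v) :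
    ((u ^ m * v ^ n) ^ (1 / (m + n))) ^ 2 = (u ^ 2) ^ (m / (m + n)) * (v ^ 2) ^ (n / (m + n)) := by
  rw [← rpow_natCast _ 2, ← rpow_mul (by positivity), mul_rpow (by positivity) (by positivity),
    ← rpow_natCast u 2, ← rpow_natCast v 2, ← rpow_mul hu, ← rpow_mul hv, ← rpow_mul hu,
    ← rpow_mul hv]
  ring_nf

lemma sqrt_add_mul_rpow_eq_sqrt_mul_geomMean (hu : 0 ≤ u) (hv : 0 ≤ v) :
    √(m + n) * (u ^ m * v ^ n) ^ (1 / (m + n)) =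
      √((m + n) * ((u ^ 2) ^ (m / (m + n)) * (v ^ 2) ^ (n / (m + n)))) := by
  rw [← rpow_one_div_add_sq hu hv, sqrt_mul' _ (sq_nonneg _), sqrt_sq (by positivity)]

lemma sqrt_mul_sq_add_eq_sqrt_mul_arithMean (hm : 0 < m) (hn : 0 < n) :
    √(m * u ^ 2 + n * v ^ 2) = √((m + n) * (m / (m + n) * u ^ 2 + n / (m + n) * v ^ 2)) := by
  congr 1
  field_simp

lemma sqrt_add_mul_rpow_le_sqrt_mul_sq_add (hm : 0 < m) (hn : 0 < n)
    (hu : 0 ≤ u) (hv : 0 ≤ v) :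
    √(m + n) * (u ^ m * v ^ n) ^ (1 / (m + n)) ≤ √(m * u ^ 2 + n * v ^ 2) := by
  rw [sqrt_add_mul_rpow_eq_sqrt_mul_geomMean hu hv, sqrt_mul_sq_add_eq_sqrt_mul_arithMean hm hn]
  gcongr
  exact geom_mean_le_arith_mean2_weighted (by positivity) (by positivity) (sq_nonneg u)
    (sq_nonneg v) (by field_simp)

lemma sqrt_add_mul_rpow_eq_sqrt_mul_sq_add_iff (hm : 0 < m) (hn : 0 < n)
    (hu : 0 ≤ u) (hv : 0 ≤ v) :
    √(m + n) * (u ^ m * v ^ n) ^ (1 / (m + n)) = √(m * u ^ 2 + n * v ^ 2) ↔ u = v := by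
  rw [sqrt_add_mul_rpow_eq_sqrt_mul_geomMean hu hv, sqrt_mul_sq_add_eq_sqrt_mul_arithMean hm hn,
    sqrt_inj (by positivity) (by positivity), mul_right_inj' (by positivity),
    geom_mean_eq_arith_mean2_weighted_iff_of_pos (by positivity) (by positivity) (sq_nonneg u)
      (sq_nonneg v) (by field_simp), pow_left_inj₀ hu hv two_ne_zero]

end QuadraticGeometricMean

lemma div_eq_div_iff_of_pow_mul_pow_eq_one {m n : ℕ} {α β p q : ℝ} (hmn : m + n ≠ 0)
    (hα : 0 < α) (hβ : 0 < β) (hp : 0 < p) (hq : 0 < q) (h : α ^ m * β ^ n = 1) :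
    p / α = q / β ↔
      α = ((p / q) ^ n) ^ (1 / ((m : ℝ) + n)) ∧ β = ((q / p) ^ m) ^ (1 / ((m : ℝ) + n)) := by
  have hN : ((m : ℝ) + n) ≠ 0 := by exact_mod_cast hmn
  rw [one_div, eq_rpow_inv hα.le (by positivity) hN, eq_rpow_inv hβ.le (by positivity) hN,
    ← Nat.cast_add, rpow_natCast, rpow_natCast]
  constructor
  · intro hpq
    obtain rfl : β = q / p * α := by field_simp at hpq ⊢; linarith
    refine ⟨?_, ?_⟩
    · calc α ^ (m + n) = α ^ m * (q / p * α) ^ n * (p / q) ^ n := by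
            rw [mul_pow, pow_add]
            field_simp
            rw [← mul_pow, div_mul_div_comm, mul_comm q p, div_self (by positivity), one_pow]
        _ = (p / q) ^ n := by rw [h, one_mul]
    · calc (q / p * α) ^ (m + n) = (q / p) ^ m * (α ^ m * (q / p * α) ^ n) := by ring
        _ = (q / p) ^ m := by rw [h, mul_one]
  · rintro ⟨hαN, hβN⟩
    have : (β / α) ^ (m + n) = (q / p) ^ (m + n) := by
      rw [div_pow, hαN, hβN, pow_add, ← inv_div q p, inv_pow, div_inv_eq_mul]
    rw [pow_left_inj₀ (by positivity) (by positivity) hmn] at this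
    field_simp at this ⊢
    linarith

theorem stmt_0 (n₁ n₂ : ℕ) (hn₁ : 2 ≤ n₁) (hn₂ : 2 ≤ n₂)
    (α₁ α₂ : ℝ) (hα₁ : 0 < α₁) (hα₂ : 0 < α₂)
    (hconstraint : α₁ ^ n₁ * α₂ ^ n₂ = 1) :
    Real.sqrt (((n₁ : ℝ) - 1) ^ 2 / α₁ ^ 2 + ((n₂ : ℝ) - 1) ^ 2 / α₂ ^ 2)
      ≥ Real.sqrt ((n₁ : ℝ) + (n₂ : ℝ)) *
        ((((n₁ : ℝ) - 1) / Real.sqrt n₁) ^ n₁ *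
          (((n₂ : ℝ) - 1) / Real.sqrt n₂) ^ n₂) ^ (1 / ((n₁ : ℝ) + (n₂ : ℝ))) ∧
    (Real.sqrt (((n₁ : ℝ) - 1) ^ 2 / α₁ ^ 2 + ((n₂ : ℝ) - 1) ^ 2 / α₂ ^ 2)
      = Real.sqrt ((n₁ : ℝ) + (n₂ : ℝ)) *
        ((((n₁ : ℝ) - 1) / Real.sqrt n₁) ^ n₁ *
          (((n₂ : ℝ) - 1) / Real.sqrt n₂) ^ n₂) ^ (1 / ((n₁ : ℝ) + (n₂ : ℝ)))
      ↔ (α₁ = ((((n₁ : ℝ) - 1) * Real.sqrt n₂ /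
              (Real.sqrt n₁ * ((n₂ : ℝ) - 1))) ^ n₂) ^ (1 / ((n₁ : ℝ) + (n₂ : ℝ)))
        ∧ α₂ = ((((n₂ : ℝ) - 1) * Real.sqrt n₁ /
              (Real.sqrt n₂ * ((n₁ : ℝ) - 1))) ^ n₁) ^ (1 / ((n₁ : ℝ) + (n₂ : ℝ))))) := by
  have h₁ : (1 : ℝ) < n₁ := by exact_mod_cast hn₁
  have h₂ : (1 : ℝ) < n₂ := by exact_mod_cast hn₂
  have hm : (0 : ℝ) < n₁ := by linarith
  have hn : (0 : ℝ) < n₂ := by linarith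
  -- the equality-case constants become `p / q` and `q / p`
  rw [← div_div_div_eq, ← div_div_div_eq]
  set p := ((n₁ : ℝ) - 1) / √n₁ with hp_def
  set q := ((n₂ : ℝ) - 1) / √n₂ with hq_def
  have hp : 0 < p := div_pos (by linarith) (by positivity)
  have hq : 0 < q := div_pos (by linarith) (by positivity)
  have hsum : ((n₁ : ℝ) - 1) ^ 2 / α₁ ^ 2 + ((n₂ : ℝ) - 1) ^ 2 / α₂ ^ 2 =
      n₁ * (p / α₁) ^ 2 + n₂ * (q / α₂) ^ 2 := by
    simp only [hp_def, hq_def, div_pow, sq_sqrt (Nat.cast_nonneg _)]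
    field_simp
  have hprod : p ^ n₁ * q ^ n₂ = (p / α₁) ^ (n₁ : ℝ) * (q / α₂) ^ (n₂ : ℝ) := by
    rw [rpow_natCast, rpow_natCast, div_pow p, div_pow q, div_mul_div_comm, hconstraint, div_one]
  rw [hsum, hprod]
  exact ⟨sqrt_add_mul_rpow_le_sqrt_mul_sq_add hm hn (by positivity) (by positivity),
    eq_comm.trans <| (sqrt_add_mul_rpow_eq_sqrt_mul_sq_add_iff hm hn (by positivity)
      (by positivity)).trans <|
        div_eq_div_iff_of_pow_mul_pow_eq_one (by omega) hα₁ hα₂ hp hq hconstraint⟩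
end

section
/- Let p ≥ 1, and for i = 1,…,p let nᵢ ≥ 2 be integers and Eᵢ > 0 real numbers; set n = n₁ + ⋯ + n_p. For all α₁,…,α_p > 0 with ∏ᵢ αᵢ^{nᵢ} = 1, one has √(∑ᵢ Eᵢ²/αᵢ²) ≥ √n · ∏ᵢ (Eᵢ/√nᵢ)^{nᵢ/n}, with equality if and only if αᵢ = (Eᵢ/√nᵢ) · ∏ₖ (√nₖ/Eₖ)^{nₖ/n} for every i. -/
/-!
Put `zᵢ = (Eᵢ / (√nᵢ αᵢ))²`. Then `∑ Eᵢ²/αᵢ² = ∑ nᵢ zᵢ`, and the volume constraint makes the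
geometric mean of `z` with weights `nᵢ/n` equal to `c²`, where `c = ∏ (Eᵢ/√nᵢ)^(nᵢ/n)`. The weighted
AM-GM inequality gives `∑ nᵢ zᵢ ≥ n c²`, with equality iff all `zᵢ` equal `c²`, i.e.
`αᵢ = (Eᵢ/√nᵢ) / c`.
-/

open Real Finset

section WeightedGeomMean

variable {ι : Type*} [Fintype ι] {n x y : ι → ℝ}

noncomputable def weightedGeomMean (n x : ι → ℝ) : ℝ := ∏ i, x i ^ (n i / ∑ k, n k)

lemma weightedGeomMean_pos (hx : ∀ i, 0 < x i) : 0 < weightedGeomMean n x :=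
  prod_pos fun i _ => rpow_pos_of_pos (hx i) _

lemma weightedGeomMean_nonneg (hx : ∀ i, 0 ≤ x i) : 0 ≤ weightedGeomMean n x :=
  prod_nonneg fun i _ => rpow_nonneg (hx i) _

lemma weightedGeomMean_div (hx : ∀ i, 0 ≤ x i) (hy : ∀ i, 0 ≤ y i) :
    weightedGeomMean n (fun i => x i / y i) = weightedGeomMean n x / weightedGeomMean n y := by
  simp only [weightedGeomMean, div_rpow (hx _) (hy _), prod_div_distrib]

lemma weightedGeomMean_inv (hx : ∀ i, 0 ≤ x i) :
    weightedGeomMean n (fun i => (x i)⁻¹) = (weightedGeomMean n x)⁻¹ := by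
  simp only [weightedGeomMean, inv_rpow (hx _), prod_inv_distrib]

lemma weightedGeomMean_pow (hx : ∀ i, 0 ≤ x i) (m : ℕ) :
    weightedGeomMean n (fun i => x i ^ m) = weightedGeomMean n x ^ m := by
  simp only [weightedGeomMean, ← rpow_pow_comm (hx _), prod_pow]

lemma weightedGeomMean_eq_one (hx : ∀ i, 0 ≤ x i) (h : ∏ i, x i ^ n i = 1) :
    weightedGeomMean n x = 1 := by
  simp only [weightedGeomMean, div_eq_mul_inv, rpow_mul (hx _)]
  rw [finsetProd_rpow _ _ (fun i _ => rpow_nonneg (hx i) _), h, one_rpow]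

lemma sum_div_sum_mul (n x : ι → ℝ) :
    ∑ i, n i / (∑ k, n k) * x i = (∑ i, n i * x i) / ∑ k, n k := by
  rw [sum_div]
  exact sum_congr rfl fun i _ => div_mul_eq_mul_div _ _ _

variable [Nonempty ι]

lemma sum_pos_of_forall_pos (hn : ∀ i, 0 < n i) : 0 < ∑ i, n i :=
  sum_pos (fun i _ => hn i) univ_nonempty

lemma sum_div_sum_eq_one (hn : ∀ i, 0 < n i) : ∑ i, n i / ∑ k, n k = 1 := by
  rw [← sum_div, div_self (sum_pos_of_forall_pos hn).ne']

lemma sum_mul_weightedGeomMean_le (hn : ∀ i, 0 < n i) (hx : ∀ i, 0 ≤ x i) :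
    (∑ i, n i) * weightedGeomMean n x ≤ ∑ i, n i * x i := by
  have amgm := geom_mean_le_arith_mean_weighted univ (fun i => n i / ∑ k, n k) x
    (fun i _ => (div_pos (hn i) (sum_pos_of_forall_pos hn)).le) (sum_div_sum_eq_one hn)
    (fun i _ => hx i)
  rw [sum_div_sum_mul, le_div_iff₀ (sum_pos_of_forall_pos hn)] at amgm
  rwa [mul_comm]

lemma sum_mul_weightedGeomMean_eq_iff (hn : ∀ i, 0 < n i) (hx : ∀ i, 0 ≤ x i) :
    (∑ i, n i) * weightedGeomMean n x = ∑ i, n i * x i ↔ ∀ j, x j = weightedGeomMean n x := by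
  have hw := sum_div_sum_eq_one hn
  have amgm := geom_mean_eq_arith_mean_weighted_iff_of_pos' univ (fun i => n i / ∑ k, n k) x
    (fun i _ => div_pos (hn i) (sum_pos_of_forall_pos hn)) hw (fun i _ => hx i)
  change weightedGeomMean n x = _ ↔ _ at amgm
  rw [mul_comm, ← eq_div_iff (sum_pos_of_forall_pos hn).ne', ← sum_div_sum_mul]
  refine ⟨fun h j => h ▸ amgm.mp h j (mem_univ j), fun h => ?_⟩
  exact (arith_mean_weighted_of_constant univ _ x _ hw fun i _ _ => h i).symm

end WeightedGeomMean

section EntropyBound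

variable {ι : Type*} [Fintype ι] {n E α q : ι → ℝ}

lemma sum_sq_div_sq_eq (hn : ∀ i, 0 < n i) (E α : ι → ℝ) :
    ∑ i, E i ^ 2 / α i ^ 2 = ∑ i, n i * (E i / √(n i) / α i) ^ 2 := by
  refine sum_congr rfl fun i _ => ?_
  have hni := (hn i).ne'
  rw [div_pow, div_pow, sq_sqrt (hn i).le]
  field_simp

lemma weightedGeomMean_div_sq (hq : ∀ i, 0 ≤ q i) (hα : ∀ i, 0 < α i)
    (hvol : ∏ i, α i ^ n i = 1) :
    weightedGeomMean n (fun i => (q i / α i) ^ 2) = weightedGeomMean n q ^ 2 := by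
  have hα₀ : ∀ i, 0 ≤ α i := fun i => (hα i).le
  rw [weightedGeomMean_pow (fun i => div_nonneg (hq i) (hα₀ i)), weightedGeomMean_div hq hα₀,
    weightedGeomMean_eq_one hα₀ hvol, div_one]

lemma sqrt_mul_weightedGeomMean_eq (hn : ∀ i, 0 < n i) (hq : ∀ i, 0 ≤ q i) (hα : ∀ i, 0 < α i)
    (hvol : ∏ i, α i ^ n i = 1) :
    √(∑ i, n i) * weightedGeomMean n q =
      √((∑ i, n i) * weightedGeomMean n (fun i => (q i / α i) ^ 2)) := by
  rw [weightedGeomMean_div_sq hq hα hvol, sqrt_mul (sum_nonneg fun i _ => (hn i).le),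
    sqrt_sq (weightedGeomMean_nonneg hq)]

variable [Nonempty ι]

theorem sqrt_mul_weightedGeomMean_le_sqrt_sum (hn : ∀ i, 0 < n i) (hE : ∀ i, 0 < E i)
    (hα : ∀ i, 0 < α i) (hvol : ∏ i, α i ^ n i = 1) :
    √(∑ i, n i) * weightedGeomMean n (fun i => E i / √(n i)) ≤ √(∑ i, E i ^ 2 / α i ^ 2) := by
  have hq : ∀ i, 0 ≤ E i / √(n i) := fun i => div_nonneg (hE i).le (sqrt_nonneg _)
  rw [sqrt_mul_weightedGeomMean_eq hn hq hα hvol, sum_sq_div_sq_eq hn]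
  exact sqrt_le_sqrt (sum_mul_weightedGeomMean_le hn fun i => sq_nonneg _)

theorem sqrt_sum_eq_sqrt_mul_weightedGeomMean_iff (hn : ∀ i, 0 < n i) (hE : ∀ i, 0 < E i)
    (hα : ∀ i, 0 < α i) (hvol : ∏ i, α i ^ n i = 1) :
    √(∑ i, E i ^ 2 / α i ^ 2) = √(∑ i, n i) * weightedGeomMean n (fun i => E i / √(n i)) ↔
      ∀ i, α i = E i / √(n i) * (weightedGeomMean n (fun i => E i / √(n i)))⁻¹ := by
  have hq : ∀ i, 0 < E i / √(n i) := fun i => div_pos (hE i) (sqrt_pos.mpr (hn i))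
  have hc := weightedGeomMean_pos (n := n) hq
  rw [sqrt_mul_weightedGeomMean_eq hn (fun i => (hq i).le) hα hvol, sum_sq_div_sq_eq hn,
    sqrt_inj (sum_nonneg fun i _ => mul_nonneg (hn i).le (sq_nonneg _))
      (mul_nonneg (sum_nonneg fun i _ => (hn i).le)
        (weightedGeomMean_nonneg fun i => sq_nonneg _)),
    eq_comm, sum_mul_weightedGeomMean_eq_iff hn fun i => sq_nonneg _,
    weightedGeomMean_div_sq (fun i => (hq i).le) hα hvol]
  refine forall_congr' fun i => ?_
  rw [pow_left_inj₀ (div_pos (hq i) (hα i)).le hc.le two_ne_zero, div_eq_iff (hα i).ne',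
    eq_mul_inv_iff_mul_eq₀ hc.ne', mul_comm, eq_comm]

end EntropyBound

theorem stmt_1 (p : ℕ) (hp : 1 ≤ p) (n : Fin p → ℕ) (E : Fin p → ℝ)
    (hn : ∀ i, 2 ≤ n i) (hE : ∀ i, 0 < E i)
    (N : ℝ) (hN : N = ∑ i, (n i : ℝ))
    (α : Fin p → ℝ) (hα : ∀ i, 0 < α i)
    (hconstraint : ∏ i, α i ^ n i = 1) :
    Real.sqrt (∑ i, (E i) ^ 2 / (α i) ^ 2)
      ≥ Real.sqrt N * ∏ i, (E i / Real.sqrt (n i)) ^ ((n i : ℝ) / N) ∧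
    (Real.sqrt (∑ i, (E i) ^ 2 / (α i) ^ 2)
      = Real.sqrt N * ∏ i, (E i / Real.sqrt (n i)) ^ ((n i : ℝ) / N)
      ↔ ∀ i, α i = E i / Real.sqrt (n i) *
          ∏ k, (Real.sqrt (n k) / E k) ^ ((n k : ℝ) / N)) := by
  have : Nonempty (Fin p) := ⟨⟨0, hp⟩⟩
  have hn₀ : ∀ i, (0 : ℝ) < n i := fun i => Nat.cast_pos.mpr (by linarith [hn i])
  have hvol : ∏ i, α i ^ (n i : ℝ) = 1 := by simpa only [rpow_natCast] using hconstraint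
  have hinv : ∏ k, (√(n k) / E k) ^ ((n k : ℝ) / N) =
      (weightedGeomMean (fun i => (n i : ℝ)) fun i => E i / √(n i))⁻¹ := by
    rw [← weightedGeomMean_inv fun i => div_nonneg (hE i).le (sqrt_nonneg _), hN]
    simp only [weightedGeomMean, inv_div]
  rw [hinv, hN]
  exact ⟨sqrt_mul_weightedGeomMean_le_sqrt_sum hn₀ hE hα hvol,
    sqrt_sum_eq_sqrt_mul_weightedGeomMean_iff hn₀ hE hα hvol⟩
end

section
/- Let n₁, n₂ ≥ 2 and suppose α₁, α₂ > 0 realize the minimum of the entropy √((n₁-1)²/α₁² + (n₂-1)²/α₂²) under α₁^{n₁}α₂^{n₂} = 1. Then the metric g_{α₁,α₂} = α₁²g₀¹ ⊕ α₂²g₀² on H^{n₁} × H^{n₂} is Einstein if and only if n₁ = n₂. -/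
/-!
Along the constraint curve `t ↦ (α₁ t^{n₂}, α₂ t^{-n₁})` the squared entropy is
`c t^{-2n₂} + d t^{2n₁}` with `c = (n₁-1)²/α₁²`, `d = (n₂-1)²/α₂²`, so minimality at `t = 1`
forces `n₂ c = n₁ d`. Writing `u = (n₁-1)/α₁²` and `v = (n₂-1)/α₂²` for the two Ricci
eigenvalues, this reads `n₂(n₁-1) u = n₁(n₂-1) v`, and then `u = v` holds exactly when
`n₂(n₁-1) = n₁(n₂-1)`, i.e. `n₁ = n₂`.
-/

open Real

theorem IsLocalMin.zpow_mul_add_zpow_mul_eq_zero {c d : ℝ} {m n : ℤ}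
    (h : IsLocalMin (fun t : ℝ => c * t ^ m + d * t ^ n) 1) : m * c + n * d = 0 := by
  have hderiv : HasDerivAt (fun t : ℝ => c * t ^ m + d * t ^ n) (c * m + d * n) 1 := by
    refine (((hasDerivAt_zpow m 1 (Or.inl one_ne_zero)).const_mul c).add
      ((hasDerivAt_zpow n 1 (Or.inl one_ne_zero)).const_mul d)).congr_deriv ?_
    simp
  linarith [h.hasDerivAt_eq_zero hderiv]

theorem mul_div_sq_eq_of_forall_pow_mul_pow_eq_one_le {p q : ℕ} {a b α₁ α₂ : ℝ}
    (hα₁ : 0 < α₁) (hα₂ : 0 < α₂) (hconstraint : α₁ ^ p * α₂ ^ q = 1)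
    (hmin : ∀ β₁ β₂ : ℝ, 0 < β₁ → 0 < β₂ → β₁ ^ p * β₂ ^ q = 1 →
      a / α₁ ^ 2 + b / α₂ ^ 2 ≤ a / β₁ ^ 2 + b / β₂ ^ 2) :
    q * (a / α₁ ^ 2) = p * (b / α₂ ^ 2) := by
  have hloc : IsLocalMin (fun t : ℝ =>
      a / α₁ ^ 2 * t ^ (-((2 * q : ℕ) : ℤ)) + b / α₂ ^ 2 * t ^ ((2 * p : ℕ) : ℤ)) 1 := by
    filter_upwards [Ioi_mem_nhds one_pos] with t (ht : 0 < t)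
    have hcurve : (α₁ * t ^ q) ^ p * (α₂ / t ^ p) ^ q = 1 := by
      rw [← hconstraint, mul_pow, div_pow, ← pow_mul, ← pow_mul, mul_comm q p]
      field_simp
    have hle := hmin _ _ (by positivity) (by positivity) hcurve
    simp only [one_zpow, mul_one]
    refine hle.trans_eq (congrArg₂ (· + ·) ?_ ?_)
    · simp only [zpow_neg, zpow_natCast]
      field_simp
      ring
    · simp only [zpow_natCast]
      field_simp
      ring
  have hcritical := hloc.zpow_mul_add_zpow_mul_eq_zero
  push_cast at hcritical
  linarith

theorem eq_iff_of_mul_sub_one_mul_eq {n₁ n₂ u v : ℝ} (hn₁ : 1 < n₁) (hu : u ≠ 0)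
    (h : n₂ * (n₁ - 1) * u = n₁ * (n₂ - 1) * v) : u = v ↔ n₁ = n₂ := by
  constructor
  · rintro rfl
    have : (n₁ - n₂) * u = 0 := by linear_combination h
    linarith [(mul_eq_zero.mp this).resolve_right hu]
  · rintro rfl
    have : (n₁ * (n₁ - 1)) * (u - v) = 0 := by linear_combination h
    have hn : n₁ * (n₁ - 1) ≠ 0 := by nlinarith
    linarith [(mul_eq_zero.mp this).resolve_left hn]

theorem stmt_3_general (n₁ n₂ : ℕ) (hn₁ : 2 ≤ n₁)
    (α₁ α₂ : ℝ) (hα₁ : 0 < α₁) (hα₂ : 0 < α₂)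
    (hconstraint : α₁ ^ n₁ * α₂ ^ n₂ = 1)
    (hmin : ∀ β₁ β₂ : ℝ, 0 < β₁ → 0 < β₂ → β₁ ^ n₁ * β₂ ^ n₂ = 1 →
      Real.sqrt (((n₁ : ℝ) - 1) ^ 2 / α₁ ^ 2 + ((n₂ : ℝ) - 1) ^ 2 / α₂ ^ 2)
        ≤ Real.sqrt (((n₁ : ℝ) - 1) ^ 2 / β₁ ^ 2 + ((n₂ : ℝ) - 1) ^ 2 / β₂ ^ 2)) :
    (((n₁ : ℝ) - 1) / α₁ ^ 2 = ((n₂ : ℝ) - 1) / α₂ ^ 2) ↔ n₁ = n₂ := by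
  have hn₁' : (1 : ℝ) < n₁ := by exact_mod_cast hn₁
  have hcritical := mul_div_sq_eq_of_forall_pow_mul_pow_eq_one_le hα₁ hα₂ hconstraint
    fun β₁ β₂ h₁ h₂ hβ => (sqrt_le_sqrt_iff (by positivity)).mp (hmin β₁ β₂ h₁ h₂ hβ)
  have hu : ((n₁ : ℝ) - 1) / α₁ ^ 2 ≠ 0 := by
    have : (0 : ℝ) < n₁ - 1 := by linarith
    positivity
  rw [eq_iff_of_mul_sub_one_mul_eq (n₂ := n₂) (v := ((n₂ : ℝ) - 1) / α₂ ^ 2) hn₁' hu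
    (by linear_combination hcritical)]
  exact Nat.cast_inj

/-- At the entropy-minimizing scaling constants, the product metric
`g_{α₁,α₂} = α₁²g₀¹ ⊕ α₂²g₀²` on `H^{n₁} × H^{n₂}` (whose Einstein condition is
`(n₁-1)/α₁² = (n₂-1)/α₂²`) is Einstein iff `n₁ = n₂`. -/
theorem stmt_3 (n₁ n₂ : ℕ) (hn₁ : 2 ≤ n₁) (hn₂ : 2 ≤ n₂)
    (α₁ α₂ : ℝ) (hα₁ : 0 < α₁) (hα₂ : 0 < α₂)
    (hconstraint : α₁ ^ n₁ * α₂ ^ n₂ = 1)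
    (hmin : ∀ β₁ β₂ : ℝ, 0 < β₁ → 0 < β₂ → β₁ ^ n₁ * β₂ ^ n₂ = 1 →
      Real.sqrt (((n₁ : ℝ) - 1) ^ 2 / α₁ ^ 2 + ((n₂ : ℝ) - 1) ^ 2 / α₂ ^ 2)
        ≤ Real.sqrt (((n₁ : ℝ) - 1) ^ 2 / β₁ ^ 2 + ((n₂ : ℝ) - 1) ^ 2 / β₂ ^ 2)) :
    (((n₁ : ℝ) - 1) / α₁ ^ 2 = ((n₂ : ℝ) - 1) / α₂ ^ 2) ↔ n₁ = n₂ :=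
  stmt_3_general n₁ n₂ hn₁ α₁ α₂ hα₁ hα₂ hconstraint hmin
end

section
/- With the same setup as the previous lemma but with weights: if c(t) = (c₁(α₁t/√(α₁²+α₂²)), c₂(α₂t/√(α₁²+α₂²))) for α₁, α₂ > 0, then the Busemann function of this unit-speed geodesic in the product M₁ × M₂ equals (α₁B₁(x₁) + α₂B₂(x₂))/√(α₁²+α₂²). -/
/-!
The distances `dᵢ(t)` from `xᵢ` to the two rescaled rays form a vector `u(t) = (d₁(t), d₂(t))` of
the Euclidean plane with `u(t) - t • a → (b₁, b₂)`, where `a = (α₁, α₂) / √(α₁² + α₂²)` is a unit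
vector. For a unit vector `a` of any real inner product space and `e → b`,
`‖t • a + e‖ - t = (‖t • a + e‖² - t²) / (‖t • a + e‖ + t) = (2t⟪a, e⟫ + ‖e‖²) / (‖t • a + e‖ + t)`,
whose denominator is `2t + o(t)`; so `‖u(t)‖ - t → ⟪a, (b₁, b₂)⟫ = (α₁b₁ + α₂b₂) / √(α₁² + α₂²)`.
-/

open Filter Topology RealInnerProductSpace WithLp

section UnitDirection

variable {E : Type*} [NormedAddCommGroup E] [InnerProductSpace ℝ E] {a : E}

theorem norm_smul_add_sub_eq (ha : ‖a‖ = 1) (e : E) {t : ℝ} (ht : 0 < t) :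
    ‖t • a + e‖ - t = (2 * ⟪a, e⟫ + ‖e‖ ^ 2 / t) / (‖a + t⁻¹ • e‖ + 1) := by
  have hscale : ‖a + t⁻¹ • e‖ = ‖t • a + e‖ / t := by
    have : t • (a + t⁻¹ • e) = t • a + e := by rw [smul_add, smul_inv_smul₀ ht.ne']
    rw [← this, norm_smul, Real.norm_of_nonneg ht.le, mul_div_cancel_left₀ _ ht.ne']
  have hsq : ‖t • a + e‖ ^ 2 = t ^ 2 + 2 * t * ⟪a, e⟫ + ‖e‖ ^ 2 := by
    rw [norm_add_sq_real, norm_smul, real_inner_smul_left, ha, Real.norm_of_nonneg ht.le]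
    ring
  have hpos : 0 < ‖t • a + e‖ + t := by positivity
  rw [hscale]
  field_simp
  linear_combination hsq

theorem tendsto_norm_sub_of_tendsto_sub_smul (ha : ‖a‖ = 1) {u : ℝ → E} {b : E}
    (hu : Tendsto (fun t => u t - t • a) atTop (𝓝 b)) :
    Tendsto (fun t => ‖u t‖ - t) atTop (𝓝 ⟪a, b⟫) := by
  set e := fun t => u t - t • a
  have hdecay : Tendsto (fun t : ℝ => t⁻¹ • e t) atTop (𝓝 0) := by
    simpa using tendsto_inv_atTop_zero.smul hu
  have hnum : Tendsto (fun t => 2 * ⟪a, e t⟫ + ‖e t‖ ^ 2 / t) atTop (𝓝 (2 * ⟪a, b⟫ + 0)) :=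
    ((tendsto_const_nhds.inner hu).const_mul 2).add ((hu.norm.pow 2).div_atTop tendsto_id)
  have hden : Tendsto (fun t => ‖a + t⁻¹ • e t‖ + 1) atTop (𝓝 2) := by
    have h := ((tendsto_const_nhds (x := a)).add hdecay).norm.add_const (1 : ℝ)
    rwa [add_zero, ha, one_add_one_eq_two] at h
  have hlim := hnum.div hden two_ne_zero
  rw [add_zero, mul_div_cancel_left₀ _ two_ne_zero] at hlim
  refine hlim.congr' ?_
  filter_upwards [eventually_gt_atTop 0] with t ht
  rw [Pi.div_apply, ← norm_smul_add_sub_eq ha (e t) ht, add_sub_cancel]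

end UnitDirection

theorem WithLp.tendsto_toLp_prod {ι α β : Type*} [TopologicalSpace α] [TopologicalSpace β]
    {l : Filter ι} {f : ι → α} {g : ι → β} {x : α} {y : β} (hf : Tendsto f l (𝓝 x))
    (hg : Tendsto g l (𝓝 y)) :
    Tendsto (fun i => toLp 2 (f i, g i)) l (𝓝 (toLp 2 (x, y))) :=
  ((prod_continuous_toLp 2 α β).tendsto _).comp (hf.prodMk_nhds hg)

theorem WithLp.norm_toLp_prod_real (x y : ℝ) : ‖toLp 2 (x, y)‖ = √(x ^ 2 + y ^ 2) := by
  simp [prod_norm_eq_of_L2]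

theorem stmt_5_general {M₁ M₂ : Type*} [MetricSpace M₁] [MetricSpace M₂]
    (c₁ : ℝ → M₁) (c₂ : ℝ → M₂)
    (α₁ α₂ : ℝ) (hα₁ : 0 < α₁) (hα₂ : 0 < α₂)
    (x₁ : M₁) (x₂ : M₂) (b₁ b₂ : ℝ)
    (hB₁ : Tendsto (fun t : ℝ => dist x₁ (c₁ t) - t) atTop (nhds b₁))
    (hB₂ : Tendsto (fun t : ℝ => dist x₂ (c₂ t) - t) atTop (nhds b₂)) :
    Tendsto (fun t : ℝ =>
        Real.sqrt (dist x₁ (c₁ (α₁ * t / Real.sqrt (α₁ ^ 2 + α₂ ^ 2))) ^ 2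
            + dist x₂ (c₂ (α₂ * t / Real.sqrt (α₁ ^ 2 + α₂ ^ 2))) ^ 2) - t)
      atTop (nhds ((α₁ * b₁ + α₂ * b₂) / Real.sqrt (α₁ ^ 2 + α₂ ^ 2))) := by
  set s := √(α₁ ^ 2 + α₂ ^ 2)
  have hs : 0 < s := by positivity
  have hunit : ‖toLp 2 (α₁ / s, α₂ / s)‖ = 1 := by
    rw [norm_toLp_prod_real, div_pow, div_pow, ← add_div, Real.sq_sqrt (by positivity),
      div_self (by positivity), Real.sqrt_one]
  have hscaled {α : ℝ} (hα : 0 < α) : Tendsto (fun t => α * t / s) atTop atTop :=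
    (tendsto_id.const_mul_atTop hα).atTop_div_const hs
  have hdefect : Tendsto (fun t => toLp 2 (dist x₁ (c₁ (α₁ * t / s)), dist x₂ (c₂ (α₂ * t / s)))
      - t • toLp 2 (α₁ / s, α₂ / s)) atTop (𝓝 (toLp 2 (b₁, b₂))) := by
    refine (tendsto_toLp_prod (hB₁.comp (hscaled hα₁)) (hB₂.comp (hscaled hα₂))).congr fun t => ?_
    rw [← toLp_smul, ← toLp_sub, Prod.smul_mk, Prod.mk_sub_mk]
    simp only [Function.comp_apply, smul_eq_mul, mul_comm t, div_mul_eq_mul_div]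
  convert tendsto_norm_sub_of_tendsto_sub_smul hunit hdefect using 2 with t
  · rw [norm_toLp_prod_real]
  · rw [prod_inner_apply, Real.inner_apply, Real.inner_apply]
    ring

theorem stmt_5 {M₁ M₂ : Type*} [MetricSpace M₁] [MetricSpace M₂]
    [CompleteSpace M₁] [CompleteSpace M₂]
    (c₁ : ℝ → M₁) (c₂ : ℝ → M₂)
    (hc₁ : ∀ s t : ℝ, dist (c₁ s) (c₁ t) = |s - t|)
    (hc₂ : ∀ s t : ℝ, dist (c₂ s) (c₂ t) = |s - t|)
    (α₁ α₂ : ℝ) (hα₁ : 0 < α₁) (hα₂ : 0 < α₂)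
    (x₁ : M₁) (x₂ : M₂) (b₁ b₂ : ℝ)
    (hB₁ : Tendsto (fun t : ℝ => dist x₁ (c₁ t) - t) atTop (nhds b₁))
    (hB₂ : Tendsto (fun t : ℝ => dist x₂ (c₂ t) - t) atTop (nhds b₂)) :
    Tendsto (fun t : ℝ =>
        Real.sqrt (dist x₁ (c₁ (α₁ * t / Real.sqrt (α₁ ^ 2 + α₂ ^ 2))) ^ 2
            + dist x₂ (c₂ (α₂ * t / Real.sqrt (α₁ ^ 2 + α₂ ^ 2))) ^ 2) - t)
      atTop (nhds ((α₁ * b₁ + α₂ * b₂) / Real.sqrt (α₁ ^ 2 + α₂ ^ 2))) :=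
  stmt_5_general c₁ c₂ α₁ α₂ hα₁ hα₂ x₁ x₂ b₁ b₂ hB₁ hB₂
end

section
/- Let H be a symmetric positive definite real n×n matrix with trace(H) = 1, and suppose n ≥ 3. Then det(H)^{1/2} / det(I - H) ≤ (√n/(n-1))^n, with equality if and only if H = (1/n)·I. -/
/-!
With `g x = log x / 2 - log (1 - x)` and `μ` the eigenvalues of `H`, the logarithm of the left
side is `∑ g (μ i)` and that of the right side is `n * g n⁻¹`, where `∑ μ i = 1`.
If every `μ i ≤ 1 / 2`, then `g` lies below its tangent at `n⁻¹` (strictly away from `n⁻¹`),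
and the tangents add up to `n * g n⁻¹`. Otherwise exactly one eigenvalue is `1 - s` with
`s < 1 / 2`; the others are controlled by AM-GM for `∑ log μ j` and by `∏ (1 - μ j) ≥ 1 - s`,
except for `n = 3`, where this is too weak and `g a + g b ≤ 2 g ((a + b) / 2)` is used instead.
-/

open Real Finset

namespace Matrix.IsHermitian

variable {𝕜 n : Type*} [RCLike 𝕜] [Fintype n] [DecidableEq n] {A : Matrix n n 𝕜}

theorem eq_smul_one_iff (hA : A.IsHermitian) (c : ℝ) :
    A = c • (1 : Matrix n n 𝕜) ↔ ∀ i, hA.eigenvalues i = c := by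
  rw [← Algebra.algebraMap_eq_smul_one]
  constructor
  · intro h i
    have : Nonempty n := ⟨i⟩
    have hspec : spectrum ℝ A = {c} := by rw [h, spectrum.scalar_eq]
    simpa [hspec] using hA.eigenvalues_mem_spectrum_real i
  · intro h
    have hdiag :
        diagonal (RCLike.ofReal ∘ hA.eigenvalues) = algebraMap ℝ (Matrix n n 𝕜) c := by
      ext i j
      simp [h, algebraMap_eq_diagonal, diagonal_apply]
    rw [hA.spectral_theorem, hdiag, Unitary.conjStarAlgAut_apply, ← Algebra.commutes, mul_assoc]
    simp

theorem det_one_sub (hA : A.IsHermitian) :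
    (1 - A).det = ∏ i, (1 - (hA.eigenvalues i : 𝕜)) := by
  simpa [hA.charpoly_eq, Polynomial.eval_prod] using (A.eval_charpoly 1).symm

end Matrix.IsHermitian

theorem Finset.one_sub_sum_le_prod_one_sub {ι : Type*} (t : Finset ι) {a : ι → ℝ}
    (h0 : ∀ i ∈ t, 0 ≤ a i) (h1 : ∀ i ∈ t, a i ≤ 1) :
    1 - ∑ i ∈ t, a i ≤ ∏ i ∈ t, (1 - a i) := by
  classical
  induction t using Finset.induction_on with
  | empty => simp
  | insert j t hj ih =>
    rw [sum_insert hj, prod_insert hj]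
    have hrest :=
      ih (fun i hi => h0 i (mem_insert_of_mem hi)) (fun i hi => h1 i (mem_insert_of_mem hi))
    have hj0 := h0 j (mem_insert_self j t)
    have hj1 := h1 j (mem_insert_self j t)
    have ht0 : 0 ≤ ∑ i ∈ t, a i := sum_nonneg fun i hi => h0 i (mem_insert_of_mem hi)
    nlinarith [mul_le_mul_of_nonneg_left hrest (sub_nonneg.2 hj1)]

theorem Finset.sum_log_le_card_mul_log_sum_div_card {ι : Type*} {t : Finset ι}
    (ht : t.Nonempty) {f : ι → ℝ} (hf : ∀ i ∈ t, 0 < f i) :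
    ∑ i ∈ t, log (f i) ≤ #t * log ((∑ i ∈ t, f i) / #t) := by
  have hc : (0 : ℝ) < #t := by exact_mod_cast ht.card_pos
  have jensen := strictConcaveOn_log_Ioi.concaveOn.le_map_sum (t := t)
    (w := fun _ => (#t : ℝ)⁻¹) (p := f) (fun _ _ => by positivity) (by simp [hc.ne']) hf
  simp only [smul_eq_mul, inv_mul_eq_div, ← sum_div] at jensen
  rwa [div_le_iff₀' hc] at jensen

noncomputable def logSqrtDivOneSub (x : ℝ) : ℝ := log x / 2 - log (1 - x)

theorem hasDerivAt_logSqrtDivOneSub {x : ℝ} (h0 : 0 < x) (h1 : x < 1) :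
    HasDerivAt logSqrtDivOneSub (1 / (2 * x) + 1 / (1 - x)) x := by
  have h1x : 1 - x ≠ 0 := sub_ne_zero.2 h1.ne'
  have hlog := (hasDerivAt_log h0.ne').div_const 2
  have hlog1 := ((hasDerivAt_id' x).const_sub 1).log h1x
  exact (hlog.sub hlog1).congr_deriv (by field_simp; ring)

-- `N / 2 + N / (N - 1)` is the derivative of `logSqrtDivOneSub` at `N⁻¹`.
theorem hasDerivAt_logSqrtDivOneSub_sub_tangentSlope_mul {N x : ℝ} (hN : 1 < N) (h0 : 0 < x)
    (h1 : x < 1) :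
    HasDerivAt (fun y => logSqrtDivOneSub y - (N / 2 + N / (N - 1)) * y)
      ((1 - N * x) * (N - 1 - (N + 1) * x) / (2 * (N - 1) * x * (1 - x))) x := by
  have : N - 1 ≠ 0 := by linarith
  have : 1 - x ≠ 0 := by linarith
  refine ((hasDerivAt_logSqrtDivOneSub h0 h1).sub ((hasDerivAt_id' x).const_mul _)).congr_deriv ?_
  field_simp
  ring

theorem logSqrtDivOneSub_lt_tangent {N x : ℝ} (hN : 3 ≤ N) (h0 : 0 < x)
    (hx : x ≤ (N - 1) / (N + 1)) (hne : x ≠ N⁻¹) :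
    logSqrtDivOneSub x < logSqrtDivOneSub N⁻¹ + (N / 2 + N / (N - 1)) * (x - N⁻¹) := by
  set h := fun y => logSqrtDivOneSub y - (N / 2 + N / (N - 1)) * y
  have hN0 : 0 < N⁻¹ := by positivity
  have hNinv : N * N⁻¹ = 1 := mul_inv_cancel₀ (by positivity)
  have hNx : N⁻¹ < (N - 1) / (N + 1) := by rw [lt_div_iff₀ (by positivity)]; nlinarith
  have hx1 : (N - 1) / (N + 1) < 1 := by rw [div_lt_one (by positivity)]; linarith
  have hcont : ∀ D ⊆ Set.Ioo 0 1, ContinuousOn h D := fun D hD y hy =>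
    (hasDerivAt_logSqrtDivOneSub_sub_tangentSlope_mul (by linarith) (hD hy).1
      (hD hy).2).continuousAt.continuousWithinAt
  have hderiv : ∀ y ∈ Set.Ioo 0 ((N - 1) / (N + 1)),
      deriv h y = (1 - N * y) * (N - 1 - (N + 1) * y) / (2 * (N - 1) * y * (1 - y)) ∧
      0 < N - 1 - (N + 1) * y ∧ 0 < 2 * (N - 1) * y * (1 - y) := by
    intro y ⟨hy0, hy⟩
    have : 0 < 1 - y := by linarith
    have : 0 < N - 1 := by linarith
    refine ⟨(hasDerivAt_logSqrtDivOneSub_sub_tangentSlope_mul (by linarith) hy0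
      (hy.trans hx1)).deriv, ?_, by positivity⟩
    rwa [lt_div_iff₀ (by positivity), mul_comm, ← sub_pos] at hy
  suffices h x < h N⁻¹ by simp only [h] at this; linarith
  rcases hne.lt_or_gt with hlt | hgt
  · refine strictMonoOn_of_deriv_pos (convex_Ioc 0 N⁻¹)
      (hcont _ fun y hy => ⟨hy.1, by linarith [hy.2]⟩) (fun y hy => ?_) ⟨h0, hlt.le⟩
      ⟨hN0, le_rfl⟩ hlt
    rw [interior_Ioc] at hy
    obtain ⟨hd, hpos, hden⟩ := hderiv y ⟨hy.1, hy.2.trans hNx⟩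
    have : N * y < 1 := hNinv ▸ mul_lt_mul_of_pos_left hy.2 (by positivity)
    rw [hd]
    exact div_pos (mul_pos (by linarith) hpos) hden
  · refine strictAntiOn_of_deriv_neg (convex_Icc N⁻¹ ((N - 1) / (N + 1)))
      (hcont _ fun y hy => ⟨hN0.trans_le hy.1, hy.2.trans_lt hx1⟩) (fun y hy => ?_)
      ⟨le_rfl, hNx.le⟩ ⟨hgt.le, hx⟩ hgt
    rw [interior_Icc] at hy
    obtain ⟨hd, hpos, hden⟩ := hderiv y ⟨hN0.trans hy.1, hy.2⟩
    have : 1 < N * y := hNinv ▸ mul_lt_mul_of_pos_left hy.1 (by positivity)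
    rw [hd]
    exact div_neg_of_neg_of_pos (mul_neg_of_neg_of_pos (by linarith) hpos) hden

theorem logSqrtDivOneSub_inv {N : ℝ} (hN : 1 < N) :
    logSqrtDivOneSub N⁻¹ = log N / 2 - log (N - 1) := by
  have hN0 : N ≠ 0 := by positivity
  rw [logSqrtDivOneSub, log_inv, show 1 - N⁻¹ = (N - 1) / N by field_simp,
    log_div (by linarith) hN0]
  ring

theorem exp_logSqrtDivOneSub {x : ℝ} (h0 : 0 < x) (h1 : x < 1) :
    exp (logSqrtDivOneSub x) = √x / (1 - x) := by
  rw [logSqrtDivOneSub, ← log_sqrt h0.le, ← log_div (by positivity) (by linarith),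
    exp_log (div_pos (sqrt_pos.2 h0) (by linarith))]

theorem sum_logSqrtDivOneSub_lt_of_le_half {ι : Type*} [Fintype ι] {μ : ι → ℝ}
    (hcard : 3 ≤ Fintype.card ι) (hpos : ∀ i, 0 < μ i) (hsum : ∑ i, μ i = 1)
    (hhalf : ∀ i, μ i ≤ 1 / 2) (hne : ∃ i, μ i ≠ (Fintype.card ι : ℝ)⁻¹) :
    ∑ i, logSqrtDivOneSub (μ i) <
      Fintype.card ι * logSqrtDivOneSub (Fintype.card ι : ℝ)⁻¹ := by
  set N : ℝ := (Fintype.card ι : ℝ)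
  have hN : (3 : ℝ) ≤ N := by simp only [N]; exact_mod_cast hcard
  have hhalf' : (1 : ℝ) / 2 ≤ (N - 1) / (N + 1) := by
    rw [div_le_div_iff₀ (by norm_num) (by linarith)]; linarith
  have htangent : ∀ i, logSqrtDivOneSub (μ i) ≤
      logSqrtDivOneSub N⁻¹ + (N / 2 + N / (N - 1)) * (μ i - N⁻¹) := fun i => by
    rcases eq_or_ne (μ i) N⁻¹ with h | h
    · simp [h]
    · exact (logSqrtDivOneSub_lt_tangent hN (hpos i) ((hhalf i).trans hhalf') h).le
  obtain ⟨j, hj⟩ := hne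
  calc ∑ i, logSqrtDivOneSub (μ i)
      < ∑ i, (logSqrtDivOneSub N⁻¹ + (N / 2 + N / (N - 1)) * (μ i - N⁻¹)) :=
        sum_lt_sum (fun i _ => htangent i)
          ⟨j, mem_univ j, logSqrtDivOneSub_lt_tangent hN (hpos j) ((hhalf j).trans hhalf') hj⟩
    _ = N * logSqrtDivOneSub N⁻¹ := by
        rw [sum_add_distrib, ← mul_sum, sum_sub_distrib, hsum]
        simp only [sum_const, card_univ, nsmul_eq_mul]
        rw [mul_inv_cancel₀ (by positivity)]
        ring

theorem logSqrtDivOneSub_add_le_two_mul_midpoint {a b : ℝ} (ha : 0 < a) (hb : 0 < b)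
    (hab : a + b ≤ 1 / 2) :
    logSqrtDivOneSub a + logSqrtDivOneSub b ≤ 2 * logSqrtDivOneSub ((a + b) / 2) := by
  have hpq : a * b ≤ ((a + b) / 2) ^ 2 := by nlinarith [sq_nonneg (a - b)]
  have hq : ((a + b) / 2) ^ 2 ≤ 1 / 16 := by nlinarith
  have hu : a * b * ((a + b) / 2) ^ 2 ≤ (1 - (a + b)) ^ 2 := by
    nlinarith [mul_le_mul hpq hq (by positivity) (by positivity : (0 : ℝ) ≤ ((a + b) / 2) ^ 2)]
  -- `q (u + p)² - p (u + q)² = (q - p) (u² - p q)` for `p = a b`, `q = ((a + b) / 2)²`,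
  -- `u = 1 - (a + b)`
  have key : a * b * (1 - (a + b) / 2) ^ 4 ≤ ((a + b) / 2) ^ 2 * ((1 - a) * (1 - b)) ^ 2 := by
    nlinarith [mul_nonneg (sub_nonneg.2 hpq) (sub_nonneg.2 hu)]
  have h1a : 0 < 1 - a := by linarith
  have h1b : 0 < 1 - b := by linarith
  have hmid : 0 < 1 - (a + b) / 2 := by linarith
  have hlog := log_le_log (by positivity) key
  rw [log_mul (by positivity) (by positivity), log_mul ha.ne' hb.ne', log_pow,
    log_mul (by positivity) (by positivity), log_pow, log_pow, log_mul h1a.ne' h1b.ne'] at hlog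
  simp only [logSqrtDivOneSub]
  push_cast at hlog
  linarith

theorem logSqrtDivOneSub_one_sub_add_two_mul_half_lt {s : ℝ} (hs0 : 0 < s) (hs : s < 1 / 2) :
    logSqrtDivOneSub (1 - s) + 2 * logSqrtDivOneSub (s / 2) < 3 * logSqrtDivOneSub 3⁻¹ := by
  have key : 2 ^ 4 * (1 - s) < 3 ^ 3 * (1 - s / 2) ^ 4 := by nlinarith [sq_nonneg (s - 1 / 2)]
  have hlog := log_lt_log (by nlinarith) key
  rw [log_mul (by norm_num) (by linarith), log_mul (by norm_num) (by nlinarith), log_pow,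
    log_pow, log_pow] at hlog
  rw [logSqrtDivOneSub_inv (by norm_num), logSqrtDivOneSub, logSqrtDivOneSub, sub_sub_cancel,
    log_div hs0.ne' two_ne_zero, show (3 : ℝ) - 1 = 2 by norm_num]
  push_cast at hlog
  linarith

theorem sum_logSqrtDivOneSub_le_of_sum_lt_one {ι : Type*} {t : Finset ι} (ht : t.Nonempty)
    {μ : ι → ℝ} (hpos : ∀ i ∈ t, 0 < μ i) (hsum : ∑ i ∈ t, μ i < 1) :
    ∑ i ∈ t, logSqrtDivOneSub (μ i) ≤
      #t / 2 * log ((∑ i ∈ t, μ i) / #t) - log (1 - ∑ i ∈ t, μ i) := by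
  have hle : ∀ i ∈ t, μ i ≤ ∑ j ∈ t, μ j := fun i hi =>
    single_le_sum (fun j hj => (hpos j hj).le) hi
  have hlog := sum_log_le_card_mul_log_sum_div_card ht hpos
  have hprod : log (1 - ∑ i ∈ t, μ i) ≤ ∑ i ∈ t, log (1 - μ i) := by
    rw [← log_prod fun i hi => by linarith [hle i hi]]
    exact log_le_log (by linarith)
      (one_sub_sum_le_prod_one_sub t (fun i hi => (hpos i hi).le)
        fun i hi => by linarith [hle i hi])
  simp only [logSqrtDivOneSub, sum_sub_distrib, ← sum_div]
  linarith

theorem four_sub_mul_log_two_le {n : ℕ} (hn : 4 ≤ n) :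
    (4 - n : ℝ) * log 2 ≤ n * log n - (n + 1) * log (n - 1) := by
  rcases hn.eq_or_lt with rfl | hn5
  · have h := log_le_log (by norm_num) (show (3 : ℝ) ^ 5 ≤ 4 ^ 4 by norm_num)
    rw [log_pow, log_pow] at h
    norm_num at h ⊢
    linarith
  · obtain ⟨k, rfl⟩ := Nat.exists_eq_add_of_le hn5
    have hN : (0 : ℝ) < 5 + k := by positivity
    have hgap : 1 ≤ (5 + k : ℝ) * (log (5 + k) - log (4 + k)) := by
      have h := one_sub_inv_le_log_of_pos (x := (5 + k : ℝ) / (4 + k)) (by positivity)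
      rw [log_div hN.ne' (by positivity), inv_div, one_sub_div hN.ne',
        show (5 + k : ℝ) - (4 + k) = 1 by ring, div_le_iff₀ hN] at h
      linarith
    have hpow : (4 + k : ℝ) ≤ 2 ^ (k + 2) := by
      have := k.lt_two_pow_self
      exact_mod_cast show 4 + k ≤ 2 ^ (k + 2) by rw [pow_add]; omega
    have hlog := log_le_log (by positivity) hpow
    rw [log_pow] at hlog
    push_cast at hlog ⊢
    rw [show (5 + k : ℝ) - 1 = 4 + k by ring]
    nlinarith [log_two_lt_d9]

theorem logSqrtDivOneSub_one_sub_add_lt_of_four_le {n : ℕ} (hn : 4 ≤ n) {s : ℝ} (hs0 : 0 < s)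
    (hs : s < 1 / 2) :
    logSqrtDivOneSub (1 - s) + ((n - 1) / 2 * log (s / (n - 1)) - log (1 - s)) <
      n * logSqrtDivOneSub (n : ℝ)⁻¹ := by
  have hN : (4 : ℝ) ≤ n := by exact_mod_cast hn
  have hlogs : log s < -log 2 := by
    rw [← log_inv]; exact log_lt_log hs0 (by linarith)
  have hlog1s : -log (1 - s) < log 2 := by
    rw [neg_lt, ← log_inv]; exact log_lt_log (by norm_num) (by linarith)
  have hprod := mul_lt_mul_of_pos_left hlogs (by linarith : (0 : ℝ) < (n - 3) / 2)
  rw [logSqrtDivOneSub_inv (by linarith), logSqrtDivOneSub, sub_sub_cancel,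
    log_div hs0.ne' (by linarith)]
  nlinarith [four_sub_mul_log_two_le hn]

theorem sum_logSqrtDivOneSub_lt_of_half_lt {ι : Type*} [Fintype ι] {μ : ι → ℝ}
    (hcard : 3 ≤ Fintype.card ι) (hpos : ∀ i, 0 < μ i) (hsum : ∑ i, μ i = 1) {k : ι}
    (hk : 1 / 2 < μ k) :
    ∑ i, logSqrtDivOneSub (μ i) <
      Fintype.card ι * logSqrtDivOneSub (Fintype.card ι : ℝ)⁻¹ := by
  classical
  set E := univ.erase k
  set s := ∑ i ∈ E, μ i
  have hsplit : μ k + s = 1 := by rw [add_sum_erase _ _ (mem_univ k), hsum]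
  have hE : #E = Fintype.card ι - 1 := by rw [card_erase_of_mem (mem_univ k), card_univ]
  have hEne : E.Nonempty := by rw [← card_pos, hE]; omega
  have hs0 : 0 < s := sum_pos (fun i _ => hpos i) hEne
  have hdecomp : ∑ i, logSqrtDivOneSub (μ i) =
      logSqrtDivOneSub (1 - s) + ∑ i ∈ E, logSqrtDivOneSub (μ i) := by
    rw [← add_sum_erase _ _ (mem_univ k), show μ k = 1 - s by linarith]
  rw [hdecomp]
  rcases hcard.eq_or_lt with h3 | h4
  · obtain ⟨a, b, hab, hEab⟩ := card_eq_two.1 (hE.trans (by omega))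
    have hs : s = μ a + μ b := by simp only [s, hEab, sum_pair hab]
    calc logSqrtDivOneSub (1 - s) + ∑ i ∈ E, logSqrtDivOneSub (μ i)
        = logSqrtDivOneSub (1 - s) + (logSqrtDivOneSub (μ a) + logSqrtDivOneSub (μ b)) := by
          rw [hEab, sum_pair hab]
      _ ≤ logSqrtDivOneSub (1 - s) + 2 * logSqrtDivOneSub (s / 2) := by
          rw [hs]
          gcongr
          exact logSqrtDivOneSub_add_le_two_mul_midpoint (hpos a) (hpos b) (by linarith)
      _ < 3 * logSqrtDivOneSub 3⁻¹ :=
          logSqrtDivOneSub_one_sub_add_two_mul_half_lt hs0 (by linarith)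
      _ = _ := by rw [← h3]; norm_num
  · calc logSqrtDivOneSub (1 - s) + ∑ i ∈ E, logSqrtDivOneSub (μ i)
        ≤ logSqrtDivOneSub (1 - s) + (#E / 2 * log (s / #E) - log (1 - s)) := by
          gcongr
          exact sum_logSqrtDivOneSub_le_of_sum_lt_one hEne (fun i _ => hpos i) (by linarith)
      _ < _ := by
          rw [hE, Nat.cast_sub (by omega), Nat.cast_one]
          exact logSqrtDivOneSub_one_sub_add_lt_of_four_le h4 hs0 (by linarith)

theorem sum_logSqrtDivOneSub_lt {ι : Type*} [Fintype ι] {μ : ι → ℝ}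
    (hcard : 3 ≤ Fintype.card ι) (hpos : ∀ i, 0 < μ i) (hsum : ∑ i, μ i = 1)
    (hne : ∃ i, μ i ≠ (Fintype.card ι : ℝ)⁻¹) :
    ∑ i, logSqrtDivOneSub (μ i) <
      Fintype.card ι * logSqrtDivOneSub (Fintype.card ι : ℝ)⁻¹ := by
  by_cases hhalf : ∀ i, μ i ≤ 1 / 2
  · exact sum_logSqrtDivOneSub_lt_of_le_half hcard hpos hsum hhalf hne
  · obtain ⟨k, hk⟩ := not_forall.1 hhalf
    exact sum_logSqrtDivOneSub_lt_of_half_lt hcard hpos hsum (not_le.1 hk)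

theorem Matrix.PosDef.sqrt_det_div_det_one_sub_eq_exp {ι : Type*} [Fintype ι] [DecidableEq ι]
    {A : Matrix ι ι ℝ} (hA : A.PosDef) (h1 : ∀ i, hA.isHermitian.eigenvalues i < 1) :
    √A.det / (1 - A).det = exp (∑ i, logSqrtDivOneSub (hA.isHermitian.eigenvalues i)) := by
  have h0 := hA.eigenvalues_pos
  rw [exp_sum, hA.isHermitian.det_eq_prod_eigenvalues, hA.isHermitian.det_one_sub]
  simp only [RCLike.ofReal_real_eq_id, id_eq]
  rw [sqrt_prod _ fun i _ => (h0 i).le, ← prod_div_distrib]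
  exact prod_congr rfl fun i _ => (exp_logSqrtDivOneSub (h0 i) (h1 i)).symm

theorem sqrt_div_sub_one_pow_eq_exp {n : ℕ} (hn : 1 < n) :
    (√n / ((n : ℝ) - 1)) ^ n = exp (n * logSqrtDivOneSub (n : ℝ)⁻¹) := by
  have hN : (1 : ℝ) < n := by exact_mod_cast hn
  have : (n : ℝ) - 1 ≠ 0 := by linarith
  have : 0 < √(n : ℝ) := sqrt_pos.2 (by linarith)
  rw [exp_nat_mul, exp_logSqrtDivOneSub (by positivity) (inv_lt_one_of_one_lt₀ hN), sqrt_inv]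
  congr 1
  field_simp
  rw [sq_sqrt (by linarith)]

theorem stmt_7_general (n : ℕ) (hn : 3 ≤ n) (H : Matrix (Fin n) (Fin n) ℝ)
    (hH : H.PosDef) (htr : H.trace = 1) :
    Real.sqrt H.det / (1 - H).det ≤ (Real.sqrt n / ((n : ℝ) - 1)) ^ n ∧
    (Real.sqrt H.det / (1 - H).det = (Real.sqrt n / ((n : ℝ) - 1)) ^ n
      ↔ H = ((n : ℝ)⁻¹) • (1 : Matrix (Fin n) (Fin n) ℝ)) := by
  have hE := hH.isHermitian
  set μ := hE.eigenvalues
  have hμ0 : ∀ i, 0 < μ i := hH.eigenvalues_pos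
  have hμsum : ∑ i, μ i = 1 := by simpa [htr] using hE.trace_eq_sum_eigenvalues.symm
  have hμ1 : ∀ i, μ i < 1 := fun i => by
    obtain ⟨j, hji⟩ := Fintype.exists_ne_of_one_lt_card (by simp; omega) i
    exact hμsum ▸ single_lt_sum hji (mem_univ i) (mem_univ j) (hμ0 j) fun k _ _ => (hμ0 k).le
  rw [hH.sqrt_det_div_det_one_sub_eq_exp hμ1, sqrt_div_sub_one_pow_eq_exp (by omega), exp_le_exp,
    exp_eq_exp, hE.eq_smul_one_iff]
  by_cases hconst : ∀ i, μ i = (n : ℝ)⁻¹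
  · have heq : ∑ i, logSqrtDivOneSub (μ i) = n * logSqrtDivOneSub (n : ℝ)⁻¹ := by
      simp [hconst]
    exact ⟨heq.le, iff_of_true heq hconst⟩
  · have hlt := sum_logSqrtDivOneSub_lt (by simpa) hμ0 hμsum (by simpa using hconst)
    simp only [Fintype.card_fin] at hlt
    exact ⟨hlt.le, iff_of_false hlt.ne hconst⟩

theorem stmt_7 (n : ℕ) (hn : 3 ≤ n) (H : Matrix (Fin n) (Fin n) ℝ)
    (hH : H.PosDef) (hsymm : H.IsSymm) (htr : H.trace = 1) :
    Real.sqrt H.det / (1 - H).det ≤ (Real.sqrt n / ((n : ℝ) - 1)) ^ n ∧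
    (Real.sqrt H.det / (1 - H).det = (Real.sqrt n / ((n : ℝ) - 1)) ^ n
      ↔ H = ((n : ℝ)⁻¹) • (1 : Matrix (Fin n) (Fin n) ℝ)) :=
  stmt_7_general n hn H hH htr
end

section
/- Let A be a symmetric positive definite real n×n matrix and ε > 0 with 1 - ε ≤ (det A)^{1/n} ≤ (1/n)·trace(A) ≤ 1 + ε. Then there exists a constant C(n) depending only on n such that ‖A - (det A)^{1/n}·I‖ ≤ C(n)·ε^{1/2} for ε small. -/
open Matrix

lemma scalar_key_amgm (n : ℕ) (hn : 1 ≤ n) (ε : ℝ) (hε : 0 < ε) (hε1 : ε ≤ 1)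
    (lam : Fin n → ℝ) (hpos : ∀ i, 0 < lam i) (g : ℝ)
    (hg : g = (∏ i, lam i) ^ (1 / (n : ℝ)))
    (h1 : 1 - ε ≤ g) (h2 : g ≤ (1 / (n : ℝ)) * ∑ i, lam i)
    (h3 : (1 / (n : ℝ)) * ∑ i, lam i ≤ 1 + ε) :
    ∑ i, (lam i - g) ^ 2 ≤ 16 * (n : ℝ) ^ 2 * ε := by
  have hn0 : (0 : ℝ) < n := by exact_mod_cast hn
  have hprodpos : 0 < ∏ i, lam i := Finset.prod_pos fun i _ => hpos i
  have hg0 : 0 < g := hg ▸ Real.rpow_pos_of_pos hprodpos _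
  -- AM-GM on square roots
  have hamgm : (n : ℝ) * Real.sqrt g ≤ ∑ i, Real.sqrt (lam i) := by
    have h := Real.geom_mean_le_arith_mean_weighted Finset.univ (fun _ => 1 / (n : ℝ))
      (fun i => Real.sqrt (lam i)) (fun i _ => by positivity)
      (by simp [Finset.sum_const, Finset.card_univ]; field_simp)
      (fun i _ => Real.sqrt_nonneg _)
    have hlhs : ∏ i, Real.sqrt (lam i) ^ (1 / (n : ℝ)) = Real.sqrt g := by
      have : ∀ i, Real.sqrt (lam i) ^ (1 / (n : ℝ)) = lam i ^ ((1:ℝ)/2 * (1 / (n : ℝ))) := by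
        intro i
        rw [Real.sqrt_eq_rpow, ← Real.rpow_mul (hpos i).le]
      rw [Finset.prod_congr rfl fun i _ => this i,
        Real.finset_prod_rpow _ _ (fun i _ => (hpos i).le),
        Real.sqrt_eq_rpow, hg, ← Real.rpow_mul hprodpos.le, mul_comm]
    rw [hlhs] at h
    rw [← Finset.mul_sum] at h
    calc (n : ℝ) * Real.sqrt g ≤ (n : ℝ) * ((1 / (n : ℝ)) * ∑ i, Real.sqrt (lam i)) := by
          exact mul_le_mul_of_nonneg_left h hn0.le
      _ = ∑ i, Real.sqrt (lam i) := by field_simp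
  -- sum of eigenvalues bounds
  have hsum_ub : ∑ i, lam i ≤ (n : ℝ) * (1 + ε) := by
    have := mul_le_mul_of_nonneg_left h3 hn0.le
    calc ∑ i, lam i = (n : ℝ) * ((1 / (n : ℝ)) * ∑ i, lam i) := by field_simp
      _ ≤ (n : ℝ) * (1 + ε) := this
  have hng : (n : ℝ) * g ≤ ∑ i, lam i := by
    have := mul_le_mul_of_nonneg_left h2 hn0.le
    calc (n : ℝ) * g ≤ (n : ℝ) * ((1 / (n : ℝ)) * ∑ i, lam i) := this
      _ = ∑ i, lam i := by field_simp
  -- key1 : sum of (sqrt lam - sqrt g)^2 ≤ 2 n ε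
  have key1 : ∑ i, (Real.sqrt (lam i) - Real.sqrt g) ^ 2 ≤ 2 * (n : ℝ) * ε := by
    have hexp : ∑ i, (Real.sqrt (lam i) - Real.sqrt g) ^ 2
        = (∑ i, lam i) - 2 * Real.sqrt g * (∑ i, Real.sqrt (lam i)) + (n : ℝ) * g := by
      rw [Finset.sum_congr rfl (fun i _ => by
        rw [sub_sq, Real.sq_sqrt (hpos i).le, Real.sq_sqrt hg0.le])]
      rw [Finset.sum_add_distrib, Finset.sum_sub_distrib, Finset.sum_const, Finset.card_univ,
        Fintype.card_fin, nsmul_eq_mul]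
      have hswap : ∑ x, 2 * Real.sqrt (lam x) * Real.sqrt g = 2 * Real.sqrt g * ∑ x, Real.sqrt (lam x) := by
        rw [Finset.mul_sum]; exact Finset.sum_congr rfl fun i _ => by ring
      rw [hswap]
    rw [hexp]
    have hsg : Real.sqrt g ^ 2 = g := Real.sq_sqrt hg0.le
    have h4 : 2 * Real.sqrt g * ((n : ℝ) * Real.sqrt g) ≤ 2 * Real.sqrt g * ∑ i, Real.sqrt (lam i) :=
      mul_le_mul_of_nonneg_left hamgm (by positivity)
    have hglb : 1 - ε ≤ g := h1
    nlinarith [hsum_ub, hglb, hn0]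
  -- key2 : termwise bound
  have hlam_ub : ∀ i, lam i ≤ 2 * (n : ℝ) := by
    intro i
    have h5 : lam i ≤ ∑ j, lam j :=
      Finset.single_le_sum (fun j _ => (hpos j).le) (Finset.mem_univ i)
    nlinarith
  have hg_ub : g ≤ 2 * (n : ℝ) := by
    have h5 : g ≤ 1 + ε := le_trans h2 h3
    have hn1 : (1:ℝ) ≤ (n:ℝ) := by exact_mod_cast hn
    nlinarith
  have key2 : ∀ i, (lam i - g) ^ 2 ≤ 8 * (n : ℝ) * (Real.sqrt (lam i) - Real.sqrt g) ^ 2 := by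
    intro i
    have ha : Real.sqrt (lam i) ^ 2 = lam i := Real.sq_sqrt (hpos i).le
    have hb : Real.sqrt g ^ 2 = g := Real.sq_sqrt hg0.le
    have ha0 : 0 ≤ Real.sqrt (lam i) := Real.sqrt_nonneg _
    have hb0 : 0 ≤ Real.sqrt g := Real.sqrt_nonneg _
    have hfac : lam i - g = (Real.sqrt (lam i) - Real.sqrt g) * (Real.sqrt (lam i) + Real.sqrt g) := by
      nlinarith
    rw [hfac, mul_pow]
    have hsum2 : (Real.sqrt (lam i) + Real.sqrt g) ^ 2 ≤ 8 * (n : ℝ) := by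
      nlinarith [hlam_ub i, hg_ub, sq_nonneg (Real.sqrt (lam i) - Real.sqrt g)]
    calc (Real.sqrt (lam i) - Real.sqrt g) ^ 2 * (Real.sqrt (lam i) + Real.sqrt g) ^ 2
        ≤ (Real.sqrt (lam i) - Real.sqrt g) ^ 2 * (8 * (n : ℝ)) :=
          mul_le_mul_of_nonneg_left hsum2 (sq_nonneg _)
      _ = 8 * (n : ℝ) * (Real.sqrt (lam i) - Real.sqrt g) ^ 2 := by ring
  calc ∑ i, (lam i - g) ^ 2
      ≤ ∑ i, 8 * (n : ℝ) * (Real.sqrt (lam i) - Real.sqrt g) ^ 2 :=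
        Finset.sum_le_sum fun i _ => key2 i
    _ = 8 * (n : ℝ) * ∑ i, (Real.sqrt (lam i) - Real.sqrt g) ^ 2 := by
        rw [← Finset.mul_sum]
    _ ≤ 8 * (n : ℝ) * (2 * (n : ℝ) * ε) := mul_le_mul_of_nonneg_left key1 (by positivity)
    _ = 16 * (n : ℝ) ^ 2 * ε := by ring

lemma frob_trace_eq (n : ℕ) (A : Matrix (Fin n) (Fin n) ℝ) (hH : A.IsHermitian) (g : ℝ)
    (hSym : A.IsSymm) :
    ((A - g • 1)ᵀ * (A - g • 1)).trace = ∑ i, (hH.eigenvalues i - g) ^ 2 := by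
  have hcoe : (RCLike.ofReal ∘ hH.eigenvalues : Fin n → ℝ) = hH.eigenvalues := by
    ext i; simp
  set U : Matrix (Fin n) (Fin n) ℝ := (hH.eigenvectorUnitary : Matrix (Fin n) (Fin n) ℝ) with hUdef
  set D : Matrix (Fin n) (Fin n) ℝ := diagonal (fun i => hH.eigenvalues i - g) with hDdef
  have hU1 : U * star U = 1 := Matrix.mem_unitaryGroup_iff.mp hH.eigenvectorUnitary.2
  have hU2 : star U * U = 1 := Matrix.mem_unitaryGroup_iff'.mp hH.eigenvectorUnitary.2
  have hB : A - g • 1 = U * D * star U := by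
    have hspec := hH.spectral_theorem
    rw [hcoe, Unitary.conjStarAlgAut_apply] at hspec
    have : D = diagonal hH.eigenvalues - g • 1 := by
      rw [smul_one_eq_diagonal, hDdef, diagonal_sub]
    rw [this, Matrix.mul_sub, Matrix.sub_mul, ← hspec]
    congr 1
    rw [Matrix.mul_smul, Matrix.smul_mul, Matrix.mul_one, hU1]
  have hBT : (A - g • 1)ᵀ = A - g • 1 := by
    rw [transpose_sub, transpose_smul, transpose_one, hSym.eq]
  have hprod : (U * D * star U) * (U * D * star U) = U * (D * D) * star U := by
    calc (U * D * star U) * (U * D * star U) = U * D * (star U * U) * D * star U := by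
          simp only [Matrix.mul_assoc]
      _ = U * (D * D) * star U := by rw [hU2]; simp only [Matrix.mul_one, Matrix.mul_assoc]
  rw [hBT, hB, hprod, Matrix.trace_mul_comm, ← Matrix.mul_assoc, hU2, Matrix.one_mul,
    hDdef, diagonal_mul_diagonal, Matrix.trace_diagonal]
  exact Finset.sum_congr rfl fun i _ => (sq _).symm

lemma trace_eq_sum_eig (n : ℕ) (A : Matrix (Fin n) (Fin n) ℝ) (hH : A.IsHermitian) :
    A.trace = ∑ i, hH.eigenvalues i := by
  have hcoe : (RCLike.ofReal ∘ hH.eigenvalues : Fin n → ℝ) = hH.eigenvalues := by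
    ext i; simp
  set U : Matrix (Fin n) (Fin n) ℝ := (hH.eigenvectorUnitary : Matrix (Fin n) (Fin n) ℝ) with hUdef
  have hU2 : star U * U = 1 := Matrix.mem_unitaryGroup_iff'.mp hH.eigenvectorUnitary.2
  have hspec := hH.spectral_theorem
  rw [hcoe, Unitary.conjStarAlgAut_apply] at hspec
  have h := congrArg Matrix.trace hspec
  rw [Matrix.trace_mul_comm, ← Matrix.mul_assoc, hU2, Matrix.one_mul,
    Matrix.trace_diagonal] at h
  exact h

/-- Quantitative rigidity of AM–GM for eigenvalues: if the geometric mean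
`(det A)^{1/n}` and the arithmetic mean `trace(A)/n` of the eigenvalues of a
symmetric positive definite matrix `A` are both `ε`-close to 1 (and to each
other), then `A` is `C(n)·√ε`-close to `(det A)^{1/n}·I` in Frobenius norm. -/
theorem stmt_8 (n : ℕ) (hn : 1 ≤ n) :
    ∃ C : ℝ, 0 < C ∧ ∀ ε : ℝ, 0 < ε → ε ≤ 1 →
      ∀ A : Matrix (Fin n) (Fin n) ℝ, A.PosDef → A.IsSymm →
        1 - ε ≤ A.det ^ (1 / (n : ℝ)) →
        A.det ^ (1 / (n : ℝ)) ≤ (1 / (n : ℝ)) * A.trace →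
        (1 / (n : ℝ)) * A.trace ≤ 1 + ε →
        Real.sqrt (((A - A.det ^ (1 / (n : ℝ)) • (1 : Matrix (Fin n) (Fin n) ℝ))ᵀ *
            (A - A.det ^ (1 / (n : ℝ)) • (1 : Matrix (Fin n) (Fin n) ℝ))).trace)
          ≤ C * ε ^ ((1 : ℝ) / 2) := by
  have hn0 : (0 : ℝ) < n := by exact_mod_cast hn
  refine ⟨4 * n, by positivity, ?_⟩
  intro ε hε hε1 A hPD hSym h1 h2 h3
  have hH : A.IsHermitian := hPD.1
  set g : ℝ := A.det ^ (1 / (n : ℝ)) with hgdef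
  have hdet : A.det = ∏ i, hH.eigenvalues i := by
    simpa using hH.det_eq_prod_eigenvalues
  have htr : A.trace = ∑ i, hH.eigenvalues i := trace_eq_sum_eig n A hH
  have hpos : ∀ i, 0 < hH.eigenvalues i := fun i => hPD.eigenvalues_pos i
  have hg : g = (∏ i, hH.eigenvalues i) ^ (1 / (n : ℝ)) := by rw [hgdef, hdet]
  rw [htr] at h2 h3
  have hbound : ∑ i, (hH.eigenvalues i - g) ^ 2 ≤ 16 * (n : ℝ) ^ 2 * ε :=
    scalar_key_amgm n hn ε hε hε1 hH.eigenvalues hpos g hg h1 h2 h3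
  rw [frob_trace_eq n A hH g hSym]
  have hs : Real.sqrt (∑ i, (hH.eigenvalues i - g) ^ 2)
      ≤ Real.sqrt (16 * (n : ℝ) ^ 2 * ε) := Real.sqrt_le_sqrt hbound
  have heq : Real.sqrt (16 * (n : ℝ) ^ 2 * ε) = 4 * (n : ℝ) * ε ^ ((1 : ℝ) / 2) := by
    rw [show (16 * (n : ℝ) ^ 2 * ε) = (4 * (n : ℝ)) ^ 2 * ε by ring,
      Real.sqrt_mul (by positivity), Real.sqrt_sq (by positivity), Real.sqrt_eq_rpow]
  rw [heq] at hs
  exact hs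
end

section
/- Let μ be a probability measure on ∂H^m (m ≥ 2) without atoms, and for x ∈ H^m define 𝔅(x) = ∫_{∂H^m} B(x,θ) dμ(θ). Then 𝔅 is strictly convex along every non-constant geodesic, tends to +∞ as x → ∞, and hence admits a unique minimizer bar(μ) ∈ H^m. -/
open MeasureTheory

/-- The Minkowski bilinear form on `ℝ^{m+1}`. -/
noncomputable def mink (m : ℕ) (x y : Fin (m + 1) → ℝ) : ℝ :=
  (∑ i : Fin m, x i.succ * y i.succ) - x 0 * y 0

/-- The hyperboloid model of real hyperbolic `m`-space. -/
def Hyp (m : ℕ) : Set (Fin (m + 1) → ℝ) := {x | mink m x x = -1 ∧ 0 < x 0}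

/-- The null vector corresponding to a boundary point `θ ∈ S^{m-1}`. -/
noncomputable def nullVec (m : ℕ) (θ : EuclideanSpace ℝ (Fin m)) : Fin (m + 1) → ℝ :=
  Fin.cons 1 fun i => θ i

/-- The Busemann function of `H^m` (hyperboloid model), normalized at `(1,0,…,0)`. -/
noncomputable def Bus (m : ℕ) (x : Fin (m + 1) → ℝ) (θ : EuclideanSpace ℝ (Fin m)) : ℝ :=
  Real.log (-(mink m x (nullVec m θ)))

/-!
Along a unit-speed geodesic `t ↦ cosh t • x + sinh t • v` the Busemann function of `θ` is
`log (α e^t + β e^{-t})`, where `2α, 2β ≥ 0` are the pairings of `θ` with the null vectors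
`x ± v`. It is strictly convex unless `α` or `β` vanishes, which happens only when `θ` is one of
the two endpoints of the geodesic; `μ` has no atoms, so the average is strictly convex.

Writing `x = x₀ (1, u)` with `‖u‖ < 1`, the Busemann function is at least `-log (2 x₀)`
everywhere and at least `log (ε x₀)` off the cap `{⟪u, θ⟫ ≥ 1 - ε}`. As `μ` has no atoms, the
caps shrink to null sets, uniformly in `u` by compactness of the closed unit ball, so for a
suitable `ε` every cap has mass at most `1/4` and the average grows like `½ log x₀`.
The average is continuous and proper, hence has a minimizer; two minimizers would be joined by a
geodesic along which the average is strictly convex, which is absurd.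
-/

open Real Set Filter Topology
open scoped RealInnerProductSpace ENNReal

lemma strictConvexOn_log_mul_exp_add_mul_exp {α β : ℝ} (hα : 0 < α) (hβ : 0 < β) :
    StrictConvexOn ℝ univ fun t => log (α * exp t + β * exp (-t)) := by
  have hpos : ∀ t, 0 < α * exp t + β * exp (-t) := fun t => by positivity
  have hderiv : ∀ t, HasDerivAt (fun t => log (α * exp t + β * exp (-t)))
      ((α * exp t - β * exp (-t)) / (α * exp t + β * exp (-t))) t := by
    intro t
    have hsum : HasDerivAt (fun t => α * exp t + β * exp (-t))
        (α * exp t - β * exp (-t)) t := by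
      simpa [sub_eq_add_neg] using ((hasDerivAt_exp t).const_mul α).fun_add
        (((hasDerivAt_exp (-t)).comp t (hasDerivAt_neg t)).const_mul β)
    exact hsum.log (hpos t).ne'
  refine StrictMono.strictConvexOn_univ_of_deriv
    (continuous_iff_continuousAt.2 fun t => (hderiv t).continuousAt) fun s t hst => ?_
  simp only [fun t => (hderiv t).deriv]
  rw [div_lt_div_iff₀ (hpos s) (hpos t)]
  have hexp : exp s * exp (-t) < exp t * exp (-s) := by
    rw [← exp_add, ← exp_add]
    exact exp_lt_exp.2 (by linarith)
  -- the cross difference of the two sides is `2 α β (e^{t-s} - e^{s-t})`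
  nlinarith [mul_lt_mul_of_pos_left hexp (mul_pos hα hβ)]

lemma strictConvexOn_integral_of_ae {X V : Type*} [MeasurableSpace X] {μ : Measure X} [NeZero μ]
    [AddCommGroup V] [Module ℝ V] {s : Set V} {F : V → X → ℝ}
    (hF : ∀ᵐ θ ∂μ, StrictConvexOn ℝ s (F · θ)) (hint : ∀ x ∈ s, Integrable (F x) μ) :
    StrictConvexOn ℝ s fun x => ∫ θ, F x θ ∂μ := by
  have hs : Convex ℝ s := hF.exists.choose_spec.1
  refine ⟨hs, fun x hx y hy hxy a b ha hb hab => ?_⟩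
  have hax := (hint x hx).const_mul a
  have hby := (hint y hy).const_mul b
  have hxy' := hint _ (hs hx hy ha.le hb.le hab)
  have hgap : ∀ᵐ θ ∂μ, 0 < a * F x θ + b * F y θ - F (a • x + b • y) θ :=
    hF.mono fun θ hθ => sub_pos.2 (hθ.2 hx hy hxy ha hb hab)
  have hsupp : 0 < μ (Function.support fun θ => a * F x θ + b * F y θ - F (a • x + b • y) θ) := by
    refine pos_iff_ne_zero.2 fun h0 => ?_
    obtain ⟨θ, hθ0, hθ⟩ := ((measure_eq_zero_iff_ae_notMem.1 h0).and hgap).exists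
    exact hθ0 (Function.mem_support.2 hθ.ne')
  have hpos := (integral_pos_iff_support_of_nonneg_ae (hgap.mono fun _ h => h.le)
    ((hax.fun_add hby).sub hxy')).2 hsupp
  rw [integral_sub (hax.fun_add hby) hxy', integral_add hax hby, integral_const_mul,
    integral_const_mul] at hpos
  simpa only [smul_eq_mul, sub_pos] using hpos

lemma sub_mul_measureReal_le_integral {X : Type*} [MeasurableSpace X] {μ : Measure X}
    [IsProbabilityMeasure μ] {f : X → ℝ} (hf : Integrable f μ) {A : Set X}
    (hA : MeasurableSet A) {a b : ℝ} (hfA : ∀ θ ∈ A, b ≤ f θ) (hfAc : ∀ θ ∉ A, a ≤ f θ) :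
    a - (a - b) * μ.real A ≤ ∫ θ, f θ ∂μ := by
  have hind : Integrable (A.indicator fun _ => a - b) μ := (integrable_const _).indicator hA
  calc a - (a - b) * μ.real A = ∫ θ, (a - A.indicator (fun _ => a - b) θ) ∂μ := by
        rw [integral_sub (integrable_const _) hind, integral_indicator_const _ hA]
        simp [mul_comm]
    _ ≤ ∫ θ, f θ ∂μ := by
        refine integral_mono ((integrable_const _).sub hind) hf fun θ => ?_
        by_cases hθ : θ ∈ A
        · simpa [hθ] using hfA θ hθ
        · simpa [hθ] using hfAc θ hθ

namespace Barycenter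

variable {m : ℕ}

local notation "E" => EuclideanSpace ℝ (Fin m)
local notation "Sph" => Metric.sphere (0 : EuclideanSpace ℝ (Fin m)) 1

noncomputable def spatial (x : Fin (m + 1) → ℝ) : E := WithLp.toLp 2 fun i => x i.succ

noncomputable def lift (s : E) : Fin (m + 1) → ℝ := Fin.cons (√(1 + ‖s‖ ^ 2)) fun i => s i

noncomputable def avgBus (μ : Measure Sph) (x : Fin (m + 1) → ℝ) : ℝ := ∫ θ, Bus m x θ ∂μ

section Minkowski

variable (x y z : Fin (m + 1) → ℝ)

lemma mink_eq_inner : mink m x y = ⟪spatial x, spatial y⟫ - x 0 * y 0 := by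
  simp [mink, spatial, PiLp.inner_apply, mul_comm]

lemma mink_self_eq : mink m x x = ‖spatial x‖ ^ 2 - x 0 ^ 2 := by
  rw [mink_eq_inner, real_inner_self_eq_norm_sq]
  ring

lemma mink_comm : mink m x y = mink m y x := by
  simp only [mink, mul_comm]

@[simp]
lemma mink_add_left : mink m (x + y) z = mink m x z + mink m y z := by
  simp only [mink, Pi.add_apply, add_mul, Finset.sum_add_distrib]
  ring

@[simp]
lemma mink_sub_left : mink m (x - y) z = mink m x z - mink m y z := by
  simp only [mink, Pi.sub_apply, sub_mul, Finset.sum_sub_distrib]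
  ring

@[simp]
lemma mink_smul_left (c : ℝ) : mink m (c • x) z = c * mink m x z := by
  simp only [mink, Pi.smul_apply, smul_eq_mul, mul_assoc, ← Finset.mul_sum]
  ring

@[simp]
lemma mink_add_right : mink m z (x + y) = mink m z x + mink m z y := by
  simp only [mink_comm z, mink_add_left]

@[simp]
lemma mink_sub_right : mink m z (x - y) = mink m z x - mink m z y := by
  simp only [mink_comm z, mink_sub_left]

@[simp]
lemma mink_smul_right (c : ℝ) : mink m z (c • x) = c * mink m z x := by
  simp only [mink_comm z, mink_smul_left]

lemma neg_mink_nullVec (θ : E) : -mink m x (nullVec m θ) = x 0 - ⟪spatial x, θ⟫ := by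
  simp [mink, nullVec, spatial, PiLp.inner_apply, mul_comm]

lemma bus_eq (θ : E) : Bus m x θ = log (x 0 - ⟪spatial x, θ⟫) := by
  rw [Bus, neg_mink_nullVec]

end Minkowski

section Hyperboloid

variable {x : Fin (m + 1) → ℝ}

lemma sq_eq_one_add_norm_sq (hx : x ∈ Hyp m) : x 0 ^ 2 = 1 + ‖spatial x‖ ^ 2 := by
  linarith [hx.1, mink_self_eq x]

lemma norm_spatial_lt (hx : x ∈ Hyp m) : ‖spatial x‖ < x 0 :=
  lt_of_pow_lt_pow_left₀ 2 hx.2.le (by linarith [sq_eq_one_add_norm_sq hx])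

lemma inner_spatial_lt (hx : x ∈ Hyp m) {θ : E} (hθ : ‖θ‖ = 1) : ⟪spatial x, θ⟫ < x 0 := by
  have := real_inner_le_norm (spatial x) θ
  rw [hθ, mul_one] at this
  linarith [norm_spatial_lt hx]

lemma continuous_bus (hx : x ∈ Hyp m) : Continuous fun θ : Sph => Bus m x θ := by
  simp only [bus_eq]
  refine (continuous_const.sub (continuous_const.inner continuous_subtype_val)).log fun θ => ?_
  exact (sub_pos.2 (inner_spatial_lt hx (norm_eq_of_mem_sphere θ))).ne'

lemma integrable_bus (μ : Measure Sph) [IsFiniteMeasure μ] (hx : x ∈ Hyp m) :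
    Integrable (fun θ : Sph => Bus m x θ) μ :=
  (continuous_bus hx).integrable_of_hasCompactSupport (HasCompactSupport.of_compactSpace _)

@[simp]
lemma spatial_lift (s : E) : spatial (lift s) = s := rfl

@[simp]
lemma lift_apply_zero (s : E) : lift s 0 = √(1 + ‖s‖ ^ 2) := rfl

lemma lift_mem_hyp (s : E) : lift s ∈ Hyp m := by
  refine ⟨?_, by simp only [lift_apply_zero]; positivity⟩
  rw [mink_self_eq, spatial_lift, lift_apply_zero, sq_sqrt (by positivity)]
  ring

lemma one_le_apply_zero (hx : x ∈ Hyp m) : 1 ≤ x 0 := by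
  nlinarith [sq_eq_one_add_norm_sq hx, hx.2, sq_nonneg ‖spatial x‖]

lemma lift_spatial (hx : x ∈ Hyp m) : lift (spatial x) = x := by
  refine funext (Fin.cases ?_ fun i => rfl)
  rw [lift_apply_zero, ← sq_eq_one_add_norm_sq hx, sqrt_sq hx.2.le]

end Hyperboloid

section NullVectors

variable {w : Fin (m + 1) → ℝ}

lemma norm_spatial_of_mink_self_eq_zero (hw : mink m w w = 0) (hw0 : 0 ≤ w 0) :
    ‖spatial w‖ = w 0 :=
  (pow_left_inj₀ (norm_nonneg _) hw0 two_ne_zero).1 (by linarith [mink_self_eq w])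

lemma inner_spatial_le_of_mink_self_eq_zero (hw : mink m w w = 0) (hw0 : 0 ≤ w 0) {θ : E}
    (hθ : ‖θ‖ = 1) : ⟪spatial w, θ⟫ ≤ w 0 := by
  simpa [hθ, norm_spatial_of_mink_self_eq_zero hw hw0] using real_inner_le_norm (spatial w) θ

lemma subsingleton_setOf_mink_nullVec_eq_zero (hw : mink m w w = 0) (hw0 : 0 < w 0) :
    {θ : Sph | mink m w (nullVec m θ) = 0}.Subsingleton := by
  have key : ∀ θ : Sph, mink m w (nullVec m θ) = 0 → spatial w = w 0 • (θ : E) := by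
    intro θ hθ
    have hnorm := norm_eq_of_mem_sphere θ
    have heq : ⟪spatial w, (θ : E)⟫ = ‖spatial w‖ * ‖(θ : E)‖ := by
      rw [hnorm, norm_spatial_of_mink_self_eq_zero hw hw0.le, mul_one]
      linarith [neg_mink_nullVec w θ]
    simpa [hnorm, norm_spatial_of_mink_self_eq_zero hw hw0.le] using
      inner_eq_norm_mul_iff_real.1 heq
  intro θ₁ h₁ θ₂ h₂
  exact Subtype.ext (smul_right_injective E hw0.ne' ((key θ₁ h₁).symm.trans (key θ₂ h₂)))

lemma ae_neg_mink_nullVec_pos (μ : Measure Sph) [NullSingletonClass μ] (hw : mink m w w = 0)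
    (hw0 : 0 < w 0) : ∀ᵐ θ : Sph ∂μ, 0 < -mink m w (nullVec m θ) := by
  filter_upwards [measure_eq_zero_iff_ae_notMem.1
    ((subsingleton_setOf_mink_nullVec_eq_zero hw hw0).measure_zero μ)] with θ hθ
  refine lt_of_le_of_ne ?_ (Ne.symm (neg_ne_zero.2 hθ))
  rw [neg_mink_nullVec, sub_nonneg]
  exact inner_spatial_le_of_mink_self_eq_zero hw hw0.le (norm_eq_of_mem_sphere θ)

end NullVectors

section Geodesics

variable {x v : Fin (m + 1) → ℝ}

lemma cosh_smul_add_sinh_smul (x v : Fin (m + 1) → ℝ) (t : ℝ) :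
    cosh t • x + sinh t • v = (exp t / 2) • (x + v) + (exp (-t) / 2) • (x - v) := by
  ext i
  simp only [Pi.add_apply, Pi.sub_apply, Pi.smul_apply, smul_eq_mul, cosh_eq, sinh_eq]
  ring

lemma bus_cosh_smul_add_sinh_smul (θ : E) (t : ℝ) :
    Bus m (cosh t • x + sinh t • v) θ =
      log (-mink m (x + v) (nullVec m θ) / 2 * exp t
        + -mink m (x - v) (nullVec m θ) / 2 * exp (-t)) := by
  rw [Bus, cosh_smul_add_sinh_smul, mink_add_left, mink_smul_left, mink_smul_left]
  ring_nf

variable (hx : x ∈ Hyp m) (hxv : mink m x v = 0) (hv : mink m v v = 1)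
include hx hxv hv

lemma abs_lt_of_mem_hyp_of_mink_eq_zero : |v 0| < x 0 := by
  have hcs := real_inner_mul_inner_self_le (spatial x) (spatial v)
  have hinner : ⟪spatial x, spatial v⟫ = x 0 * v 0 := by linarith [mink_eq_inner x v]
  have hsx : ‖spatial x‖ ^ 2 = x 0 ^ 2 - 1 := by linarith [sq_eq_one_add_norm_sq hx]
  have hsv : ‖spatial v‖ ^ 2 = 1 + v 0 ^ 2 := by linarith [mink_self_eq v]
  rw [real_inner_self_eq_norm_sq, real_inner_self_eq_norm_sq, hinner, hsx, hsv] at hcs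
  refine abs_lt_of_sq_lt_sq ?_ hx.2.le
  nlinarith

lemma mink_self_add_eq_zero : mink m (x + v) (x + v) = 0 := by
  simp only [mink_add_left, mink_add_right, hx.1, hxv, hv, mink_comm v x]
  ring

lemma mink_self_sub_eq_zero : mink m (x - v) (x - v) = 0 := by
  simp only [mink_sub_left, mink_sub_right, hx.1, hxv, hv, mink_comm v x]
  ring

lemma cosh_smul_add_sinh_smul_mem_hyp (t : ℝ) : cosh t • x + sinh t • v ∈ Hyp m := by
  refine ⟨?_, ?_⟩
  · simp only [mink_add_left, mink_add_right, mink_smul_left, mink_smul_right, hx.1, hxv, hv,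
      mink_comm v x]
    linear_combination -(cosh_sq_sub_sinh_sq t)
  · have hv0 := abs_lt.1 (abs_lt_of_mem_hyp_of_mink_eq_zero hx hxv hv)
    rw [cosh_smul_add_sinh_smul]
    simp only [Pi.add_apply, Pi.sub_apply, Pi.smul_apply, smul_eq_mul]
    have := exp_pos t
    have := exp_pos (-t)
    nlinarith

theorem strictConvexOn_avgBus_geodesic (μ : Measure Sph) [IsProbabilityMeasure μ]
    [NullSingletonClass μ] :
    StrictConvexOn ℝ univ fun t => avgBus μ (cosh t • x + sinh t • v) := by
  have hv0 := abs_lt.1 (abs_lt_of_mem_hyp_of_mink_eq_zero hx hxv hv)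
  refine strictConvexOn_integral_of_ae ?_
    fun t _ => integrable_bus μ (cosh_smul_add_sinh_smul_mem_hyp hx hxv hv t)
  filter_upwards [ae_neg_mink_nullVec_pos μ (mink_self_add_eq_zero hx hxv hv)
      (by simp only [Pi.add_apply]; linarith),
    ae_neg_mink_nullVec_pos μ (mink_self_sub_eq_zero hx hxv hv)
      (by simp only [Pi.sub_apply]; linarith)] with θ hα hβ
  simp only [bus_cosh_smul_add_sinh_smul]
  exact strictConvexOn_log_mul_exp_add_mul_exp (half_pos hα) (half_pos hβ)

end Geodesics

section Caps

def cap (u : E) (ε : ℝ) : Set Sph := {θ | 1 - ε ≤ ⟪u, (θ : E)⟫}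

lemma isClosed_cap (u : E) (ε : ℝ) : IsClosed (cap u ε) :=
  isClosed_le continuous_const (continuous_const.inner continuous_subtype_val)

lemma cap_subset_cap {u u' : E} {ε ε' : ℝ} (h : ‖u' - u‖ + ε ≤ ε') : cap u' ε ⊆ cap u ε' := by
  intro θ (hθ : 1 - ε ≤ ⟪u', (θ : E)⟫)
  have hcs := real_inner_le_norm (u' - u) (θ : E)
  rw [norm_eq_of_mem_sphere θ, mul_one, inner_sub_left] at hcs
  show 1 - ε' ≤ ⟪u, (θ : E)⟫
  linarith

lemma subsingleton_cap_zero {u : E} (hu : ‖u‖ ≤ 1) : (cap u 0).Subsingleton := by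
  suffices h : ∀ θ ∈ cap u 0, (θ : E) = u from
    fun θ₁ h₁ θ₂ h₂ => Subtype.ext ((h θ₁ h₁).trans (h θ₂ h₂).symm)
  intro θ (hθ : 1 - 0 ≤ ⟪u, (θ : E)⟫)
  -- `‖u - θ‖² = ‖u‖² - 2⟪u, θ⟫ + 1 ≤ 0`
  have h := norm_sub_sq_real u (θ : E)
  rw [norm_eq_of_mem_sphere θ] at h
  have : ‖u - (θ : E)‖ ^ 2 ≤ 0 := by nlinarith [norm_nonneg u]
  exact (sub_eq_zero.1 (norm_eq_zero.1 (by nlinarith [norm_nonneg (u - (θ : E))]))).symm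

lemma eventually_measure_cap_lt (μ : Measure Sph) [IsFiniteMeasure μ] [NullSingletonClass μ]
    {u : E} (hu : ‖u‖ ≤ 1) {δ : ℝ≥0∞} (hδ : 0 < δ) :
    ∀ᶠ ε in 𝓝[>] 0, μ (cap u ε) < δ := by
  have hlim := tendsto_measure_biInter_gt (μ := μ) (s := cap u) (a := 0)
    (fun ε _ => (isClosed_cap u ε).measurableSet.nullMeasurableSet)
    (fun ε ε' _ hε => cap_subset_cap (by simpa using hε)) ⟨1, one_pos, measure_ne_top μ _⟩
  have hinter : ⋂ ε > 0, cap u ε = cap u 0 := by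
    ext θ
    simp only [mem_iInter]
    refine ⟨fun h => ?_, fun h ε hε => ?_⟩
    · show 1 - 0 ≤ ⟪u, (θ : E)⟫
      rw [sub_zero]
      refine le_of_forall_pos_le_add fun ε hε => ?_
      have : 1 - ε ≤ ⟪u, (θ : E)⟫ := h ε hε
      linarith
    · have : 1 - 0 ≤ ⟪u, (θ : E)⟫ := h
      show 1 - ε ≤ ⟪u, (θ : E)⟫
      linarith
  rw [hinter, (subsingleton_cap_zero hu).measure_zero μ] at hlim
  exact hlim.eventually_lt_const hδ

lemma exists_pos_forall_measure_cap_lt (μ : Measure Sph) [IsFiniteMeasure μ]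
    [NullSingletonClass μ] {δ : ℝ≥0∞} (hδ : 0 < δ) :
    ∃ ε > 0, ∀ u ∈ Metric.closedBall (0 : E) 1, μ (cap u ε) < δ := by
  have hlocal : ∀ u ∈ Metric.closedBall (0 : E) 1,
      ∀ᶠ p : ℝ × E in 𝓝 (0, u), μ (cap p.2 p.1) < δ := by
    intro u hu
    obtain ⟨ε, hε, hεpos⟩ :=
      ((eventually_measure_cap_lt μ (mem_closedBall_zero_iff.1 hu) hδ).and
        self_mem_nhdsWithin).exists
    have hnear : ∀ᶠ p : ℝ × E in 𝓝 (0, u), ‖p.2 - u‖ + p.1 < ε :=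
      ((continuous_snd.sub continuous_const).norm.add continuous_fst).continuousAt.eventually_lt
        continuousAt_const (by simpa using hεpos)
    exact hnear.mono fun p hp => (measure_mono (cap_subset_cap hp.le)).trans_lt hε
  have huniform : ∀ᶠ ε in 𝓝[>] (0 : ℝ), ∀ u ∈ Metric.closedBall (0 : E) 1, μ (cap u ε) < δ :=
    ((isCompact_closedBall (0 : E) 1).eventually_forall_of_forall_eventually
      (P := fun ε u => μ (cap u ε) < δ) hlocal).filter_mono nhdsWithin_le_nhds
  obtain ⟨ε, hε, hεpos⟩ := (huniform.and self_mem_nhdsWithin).exists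
  exact ⟨ε, hεpos, hε⟩

end Caps

section Coercivity

variable {x : Fin (m + 1) → ℝ}

lemma neg_log_two_mul_le_bus (hx : x ∈ Hyp m) (θ : Sph) : -log (2 * x 0) ≤ Bus m x θ := by
  have hx0 : 0 < x 0 := hx.2
  rw [bus_eq, ← log_inv]
  refine log_le_log (by positivity) ?_
  have hcs := real_inner_le_norm (spatial x) θ
  rw [norm_eq_of_mem_sphere θ, mul_one] at hcs
  have hr := norm_spatial_lt hx
  -- `(x₀ - ‖s‖)(x₀ + ‖s‖) = 1` and `x₀ + ‖s‖ ≤ 2 x₀`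
  rw [inv_eq_one_div, div_le_iff₀ (by linarith)]
  nlinarith [sq_eq_one_add_norm_sq hx, norm_nonneg (spatial x)]

lemma log_mul_le_bus (hx : x ∈ Hyp m) {ε : ℝ} (hε : 0 < ε) {θ : Sph}
    (hθ : θ ∉ cap ((x 0)⁻¹ • spatial x) ε) : log (x 0 * ε) ≤ Bus m x θ := by
  have hθ' : ⟪(x 0)⁻¹ • spatial x, (θ : E)⟫ < 1 - ε := not_le.1 hθ
  rw [real_inner_smul_left, inv_mul_lt_iff₀ hx.2] at hθ'
  rw [bus_eq]
  exact log_le_log (mul_pos hx.2 hε) (by linarith)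

lemma le_avgBus_of_measureReal_cap_le (μ : Measure Sph) [IsProbabilityMeasure μ] {ε : ℝ}
    (hε : 0 < ε) (hcap : ∀ u ∈ Metric.closedBall (0 : E) 1, μ.real (cap u ε) ≤ 1 / 4)
    (hx : x ∈ Hyp m) (hxε : 1 ≤ x 0 * ε) :
    (2 * log (x 0) + 3 * log ε - log 2) / 4 ≤ avgBus μ x := by
  set u : E := (x 0)⁻¹ • spatial x
  have hu : u ∈ Metric.closedBall (0 : E) 1 := by
    rw [mem_closedBall_zero_iff, norm_smul, norm_inv, Real.norm_of_nonneg hx.2.le,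
      inv_mul_le_one₀ hx.2]
    exact (norm_spatial_lt hx).le
  have hlower := sub_mul_measureReal_le_integral (integrable_bus μ hx)
    (isClosed_cap u ε).measurableSet (fun θ _ => neg_log_two_mul_le_bus hx θ)
    (fun θ hθ => log_mul_le_bus hx hε hθ)
  have hτ := hcap u hu
  have hτ0 : 0 ≤ μ.real (cap u ε) := measureReal_nonneg
  have ha : 0 ≤ log (x 0 * ε) := log_nonneg hxε
  have hb : 0 ≤ log (2 * x 0) := log_nonneg (by linarith [one_le_apply_zero hx])
  rw [log_mul hx.2.ne' hε.ne'] at ha hlower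
  rw [log_mul two_ne_zero hx.2.ne'] at hb hlower
  unfold avgBus
  nlinarith

theorem exists_forall_lt_avgBus (μ : Measure Sph) [IsProbabilityMeasure μ]
    [NullSingletonClass μ] (C : ℝ) : ∃ R, ∀ x ∈ Hyp m, R < x 0 → C < avgBus μ x := by
  obtain ⟨ε, hε, hcap⟩ := exists_pos_forall_measure_cap_lt μ (δ := ENNReal.ofReal (1 / 4))
    (by norm_num)
  refine ⟨max ε⁻¹ (exp ((4 * C - 3 * log ε + log 2) / 2)), fun x hx hR => ?_⟩
  have hxε : 1 ≤ x 0 * ε := by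
    have := (le_max_left _ _).trans_lt hR
    rw [inv_lt_iff_one_lt_mul₀ hε] at this
    linarith
  have hlog : (4 * C - 3 * log ε + log 2) / 2 < log (x 0) :=
    (lt_log_iff_exp_lt hx.2).2 ((le_max_right _ _).trans_lt hR)
  have := le_avgBus_of_measureReal_cap_le μ hε
    (fun u hu => ENNReal.toReal_le_of_le_ofReal (by norm_num) (hcap u hu).le) hx hxε
  linarith

end Coercivity

section Minimizer

lemma bus_lift (s θ : E) : Bus m (lift s) θ = log (√(1 + ‖s‖ ^ 2) - ⟪s, θ⟫) := by
  rw [bus_eq, spatial_lift, lift_apply_zero]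

lemma continuous_avgBus_lift (μ : Measure Sph) [IsFiniteMeasure μ] :
    Continuous fun s : E => avgBus μ (lift s) := by
  have hjoint : Continuous (Function.uncurry fun (s : E) (θ : Sph) => Bus m (lift s) θ) := by
    simp only [Function.uncurry_def, bus_lift]
    refine Continuous.log ?_ fun p => ?_
    · exact (continuous_const.add (continuous_fst.norm.pow 2)).sqrt.sub
        (continuous_fst.inner (continuous_subtype_val.comp continuous_snd))
    · have := inner_spatial_lt (lift_mem_hyp p.1) (norm_eq_of_mem_sphere p.2)
      rw [spatial_lift, lift_apply_zero] at this
      exact (sub_pos.2 this).ne'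
  simpa only [avgBus, Measure.restrict_univ] using
    continuous_parametric_integral_of_continuous (μ := μ) hjoint isCompact_univ

lemma avgBus_lift_zero (μ : Measure Sph) : avgBus μ (lift (0 : E)) = 0 := by
  simp [avgBus, bus_lift]

theorem exists_isMinOn_avgBus (μ : Measure Sph) [IsProbabilityMeasure μ]
    [NullSingletonClass μ] : ∃ z ∈ Hyp m, IsMinOn (avgBus μ) (Hyp m) z := by
  obtain ⟨R, hR⟩ := exists_forall_lt_avgBus μ 0
  have hproper : ∀ᶠ s in cocompact E, avgBus μ (lift 0) ≤ avgBus μ (lift s) := by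
    filter_upwards [tendsto_norm_cocompact_atTop.eventually_gt_atTop R] with s hs
    have := norm_spatial_lt (lift_mem_hyp s)
    rw [spatial_lift] at this
    exact (avgBus_lift_zero μ).trans_le (hR _ (lift_mem_hyp s) (hs.trans this)).le
  obtain ⟨s₀, hs₀⟩ := (continuous_avgBus_lift μ).exists_forall_le' 0 hproper
  refine ⟨lift s₀, lift_mem_hyp s₀, isMinOn_iff.2 fun w hw => ?_⟩
  rw [← lift_spatial hw]
  exact hs₀ _

variable {z z' : Fin (m + 1) → ℝ}

lemma mink_lt_neg_one (hz : z ∈ Hyp m) (hz' : z' ∈ Hyp m) (hne : z ≠ z') :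
    mink m z z' < -1 := by
  have hs : spatial z ≠ spatial z' := fun h => hne (by rw [← lift_spatial hz, h, lift_spatial hz'])
  have hsub := norm_sub_sq_real (spatial z) (spatial z')
  have hpos : 0 < ‖spatial z - spatial z'‖ ^ 2 := by
    have := norm_pos_iff.2 (sub_ne_zero.2 hs)
    positivity
  have hcs := real_inner_mul_inner_self_le (spatial z) (spatial z')
  rw [real_inner_self_eq_norm_sq, real_inner_self_eq_norm_sq] at hcs
  rw [mink_eq_inner]
  -- reverse Cauchy–Schwarz: `z₀ z₀' ≥ 1 + ‖s‖ ‖s'‖ ≥ 1 + ⟪s, s'⟫`, with equality only if `s = s'`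
  nlinarith [sq_eq_one_add_norm_sq hz, sq_eq_one_add_norm_sq hz', mul_pos hz.2 hz'.2,
    sq_nonneg (z 0 * z' 0 + 1 + ⟪spatial z, spatial z'⟫),
    sq_nonneg (z 0 * z' 0 - 1 - ⟪spatial z, spatial z'⟫)]

lemma exists_cosh_smul_add_sinh_smul_eq (hz : z ∈ Hyp m) (hz' : z' ∈ Hyp m) (hne : z ≠ z') :
    ∃ v T, mink m z v = 0 ∧ mink m v v = 1 ∧ 0 < T ∧ cosh T • z + sinh T • v = z' := by
  set c := -mink m z z'
  have hc : 1 < c := by linarith [mink_lt_neg_one hz hz' hne]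
  have hT := arcosh_pos hc
  have hsinh := sinh_pos_iff.2 hT
  have hzz' : mink m z z' = -c := (neg_neg _).symm
  have hw : mink m (z' - c • z) (z' - c • z) = sinh (arcosh c) ^ 2 := by
    rw [sinh_arcosh hc.le, sq_sqrt (by nlinarith)]
    simp only [mink_sub_left, mink_sub_right, mink_smul_left, mink_smul_right, hz.1, hz'.1,
      mink_comm z' z, hzz']
    ring
  refine ⟨(sinh (arcosh c))⁻¹ • (z' - c • z), arcosh c, ?_, ?_, hT, ?_⟩
  · simp only [mink_smul_right, mink_sub_right, hz.1, hzz']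
    ring
  · simp only [mink_smul_left, mink_smul_right, hw]
    field_simp
  · rw [cosh_arcosh hc.le, smul_smul, mul_inv_cancel₀ hsinh.ne', one_smul, add_sub_cancel]

lemma eq_of_isMinOn_avgBus (μ : Measure Sph) [IsProbabilityMeasure μ] [NullSingletonClass μ]
    (hz : z ∈ Hyp m) (hz' : z' ∈ Hyp m) (hmin : IsMinOn (avgBus μ) (Hyp m) z)
    (hmin' : IsMinOn (avgBus μ) (Hyp m) z') : z = z' := by
  by_contra hne
  obtain ⟨v, T, hzv, hv, hT, hzT⟩ := exists_cosh_smul_add_sinh_smul_eq hz hz' hne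
  have hmid := (strictConvexOn_avgBus_geodesic hz hzv hv μ).2 (mem_univ 0) (mem_univ T) hT.ne
    (by norm_num : (0 : ℝ) < 1 / 2) (by norm_num : (0 : ℝ) < 1 / 2) (by norm_num)
  simp only [cosh_zero, sinh_zero, one_smul, zero_smul, add_zero, hzT, smul_eq_mul] at hmid
  have h1 := isMinOn_iff.1 hmin _
    (cosh_smul_add_sinh_smul_mem_hyp hz hzv hv (1 / 2 * 0 + 1 / 2 * T))
  have h2 := isMinOn_iff.1 hmin' z hz
  linarith

end Minimizer

end Barycenter

open Barycenter

theorem stmt_12_general (m : ℕ)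
    (μ : Measure (Metric.sphere (0 : EuclideanSpace ℝ (Fin m)) 1))
    [IsProbabilityMeasure μ] [NullSingletonClass μ] :
    (∀ x ∈ Hyp m, ∀ v : Fin (m + 1) → ℝ, mink m x v = 0 → mink m v v = 1 →
      StrictConvexOn ℝ Set.univ
        (fun t : ℝ => ∫ θ, Bus m (Real.cosh t • x + Real.sinh t • v) ↑θ ∂μ)) ∧
    (∀ C : ℝ, ∃ R : ℝ, ∀ x ∈ Hyp m, R < x 0 → C < ∫ θ, Bus m x ↑θ ∂μ) ∧
    (∃! z, z ∈ Hyp m ∧ ∀ w ∈ Hyp m, (∫ θ, Bus m z ↑θ ∂μ) ≤ ∫ θ, Bus m w ↑θ ∂μ) := by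
  refine ⟨fun x hx v hxv hv => strictConvexOn_avgBus_geodesic hx hxv hv μ,
    exists_forall_lt_avgBus μ, ?_⟩
  obtain ⟨z, hz, hmin⟩ := exists_isMinOn_avgBus μ
  exact ⟨z, ⟨hz, isMinOn_iff.1 hmin⟩, fun z' ⟨hz', hmin'⟩ =>
    eq_of_isMinOn_avgBus μ hz' hz (isMinOn_iff.2 hmin') hmin⟩

/-- The averaged Busemann function of an atomless probability measure `μ` on
`∂H^m`: it is strictly convex along every (unit-speed) geodesic, tends to `+∞`
at infinity, and admits a unique minimizer (the barycenter of `μ`). -/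
theorem stmt_12 (m : ℕ) (hm : 2 ≤ m)
    (μ : Measure (Metric.sphere (0 : EuclideanSpace ℝ (Fin m)) 1))
    [IsProbabilityMeasure μ] [NullSingletonClass μ] :
    (∀ x ∈ Hyp m, ∀ v : Fin (m + 1) → ℝ, mink m x v = 0 → mink m v v = 1 →
      StrictConvexOn ℝ Set.univ
        (fun t : ℝ => ∫ θ, Bus m (Real.cosh t • x + Real.sinh t • v) ↑θ ∂μ)) ∧
    (∀ C : ℝ, ∃ R : ℝ, ∀ x ∈ Hyp m, R < x 0 → C < ∫ θ, Bus m x ↑θ ∂μ) ∧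
    (∃! z, z ∈ Hyp m ∧ ∀ w ∈ Hyp m, (∫ θ, Bus m z ↑θ ∂μ) ≤ ∫ θ, Bus m w ↑θ ∂μ) :=
  stmt_12_general m μ
end
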